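/- arXiv:math/0511200 — 7 statements merged into one kernel-verified Lean document; each statement's English description precedes it below -/
import Mathlib

section
/- For every n ≥ 1, the number of parking functions of length n is (n+1)^{n-1}. -/
/-- A word over the positive integers is a parking function if, for every
`i` with `1 ≤ i ≤ n` (where `n` is its length), at least `i` of its letters
are `≤ i`; this is equivalent to the condition that its nondecreasing
rearrangement `a'` satisfies `a'ᵢ ≤ i` for all `i`. -/
def IsParkingFunction (w : List ℕ) : Prop :=
  (∀ x ∈ w, 1 ≤ x) ∧
  ∀ i : ℕ, 1 ≤ i → i ≤ w.length → i ≤ (w.filter (fun x => x ≤ i)).length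

lemma pointwise (N : ℕ) (hN : 0 < N) (s : ZMod N) (r k : ℕ) (hk : k ≤ N) :
    (if s.val < (r + k) % N then 1 else 0) + (r + k) / N
      = ((if s.val < r % N then 1 else 0) + r / N)
        + (if (s - (r : ZMod N)).val < k then 1 else 0) := by
  haveI : NeZero N := ⟨hN.ne'⟩
  set u := r % N with hu
  set q := r / N with hq
  have hvlt : s.val < N := ZMod.val_lt s
  set v := s.val with hv
  have hulN : u < N := Nat.mod_lt _ hN
  -- compute (s - r).val
  have hcast : (r : ZMod N) = (u : ZMod N) := (ZMod.natCast_mod r N).symm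
  have hval : ((u : ℕ) : ZMod N).val = u := ZMod.val_cast_of_lt hulN
  have hneg : (-(u : ZMod N)).val = (N - u) % N := by
    rw [ZMod.neg_val]
    split_ifs with h
    · have hu0 : u = 0 := by
        have := congrArg ZMod.val h
        rw [hval] at this
        simpa using this
      simp [hu0]
    · have hu0 : u ≠ 0 := by
        intro h0
        exact h (by simp [h0])
      rw [hval, Nat.mod_eq_of_lt (by omega)]
  have hsub : (s - (r : ZMod N)).val = (v + (N - u) % N) % N := by
    rw [hcast, sub_eq_add_neg, ZMod.val_add, hneg]
  -- decompose r + k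
  have hdm : N * q + u = r := Nat.div_add_mod r N
  have hrk : r + k = (u + k) + N * q := by omega
  have hmod : (r + k) % N = (u + k) % N := by
    rw [hrk, Nat.add_mul_mod_self_left]
  have hdiv : (r + k) / N = (u + k) / N + q := by
    rw [hrk, Nat.add_mul_div_left _ _ hN]
  rw [hmod, hdiv, hsub]
  have hNu : (N - u) % N = if u = 0 then 0 else N - u := by
    split_ifs with h
    · simp [h]
    · exact Nat.mod_eq_of_lt (by omega)
  rcases Nat.lt_or_ge (u + k) N with h1 | h1
  · have hm1 : (u + k) % N = u + k := Nat.mod_eq_of_lt h1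
    have hd1 : (u + k) / N = 0 := Nat.div_eq_of_lt h1
    rw [hm1, hd1]
    rcases eq_or_ne u 0 with h0 | h0
    · simp only [hNu, h0, if_true, Nat.sub_zero, Nat.mod_self, Nat.add_zero,
        Nat.mod_eq_of_lt hvlt]
      split_ifs <;> omega
    · simp only [hNu, h0, if_false]
      rcases Nat.lt_or_ge (v + (N - u)) N with h2 | h2
      · rw [Nat.mod_eq_of_lt h2]
        split_ifs <;> omega
      · have : (v + (N - u)) % N = v - u := by
          rw [Nat.mod_eq_sub_mod h2, Nat.mod_eq_of_lt (by omega)]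
          omega
        rw [this]
        split_ifs <;> omega
  · have hm1 : (u + k) % N = u + k - N := by
      rw [Nat.mod_eq_sub_mod h1, Nat.mod_eq_of_lt (by omega)]
    have hd1 : (u + k) / N = 1 := by
      apply Nat.div_eq_of_lt_le <;> omega
    rw [hm1, hd1]
    rcases eq_or_ne u 0 with h0 | h0
    · simp only [hNu, h0, if_true, Nat.sub_zero, Nat.mod_self, Nat.add_zero,
        Nat.mod_eq_of_lt hvlt]
      split_ifs <;> omega
    · simp only [hNu, h0, if_false]
      rcases Nat.lt_or_ge (v + (N - u)) N with h2 | h2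
      · rw [Nat.mod_eq_of_lt h2]
        split_ifs <;> omega
      · have : (v + (N - u)) % N = v - u := by
          rw [Nat.mod_eq_sub_mod h2, Nat.mod_eq_of_lt (by omega)]
          omega
        rw [this]
        split_ifs <;> omega

namespace PFAux

variable {n : ℕ}

/-- Parking condition on functions `Fin n → ZMod (n+1)` (0-based values). -/
def Q (n : ℕ) (a : Fin n → ZMod (n + 1)) : Prop :=
  ∀ k, 1 ≤ k → k ≤ n → k ≤ (Finset.univ.filter (fun j => (a j).val < k)).card

/-- Circular cumulative counting function. -/
def C (n : ℕ) (a : Fin n → ZMod (n + 1)) (t : ℕ) : ℕ :=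
  (Finset.univ.filter (fun j => (a j).val < t % (n + 1))).card + (t / (n + 1)) * n

lemma C_eq_sum (a : Fin n → ZMod (n + 1)) (t : ℕ) :
    C n a t = ∑ j : Fin n, ((if (a j).val < t % (n + 1) then 1 else 0) + t / (n + 1)) := by
  rw [C, Finset.sum_add_distrib, Finset.card_filter, Finset.sum_const, Finset.card_univ,
    Fintype.card_fin, smul_eq_mul, mul_comm]

lemma arc (a : Fin n → ZMod (n + 1)) (r k : ℕ) (hk : k ≤ n + 1) :
    C n a (r + k) = C n a r
      + (Finset.univ.filter (fun j => (a j - (r : ZMod (n + 1))).val < k)).card := by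
  rw [C_eq_sum, C_eq_sum, Finset.card_filter, ← Finset.sum_add_distrib]
  exact Finset.sum_congr rfl fun j _ => pointwise (n + 1) (by omega) (a j) r k hk

lemma C_period (a : Fin n → ZMod (n + 1)) (t : ℕ) :
    C n a (t + (n + 1)) = C n a t + n := by
  rw [C, C, Nat.add_mod_right, Nat.add_div_right _ (by omega)]
  ring

/-- Integer excess function. -/
def S (n : ℕ) (a : Fin n → ZMod (n + 1)) (t : ℕ) : ℤ := (C n a t : ℤ) - t

lemma S_period (a : Fin n → ZMod (n + 1)) (t : ℕ) :
    S n a (t + (n + 1)) = S n a t - 1 := by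
  rw [S, S, C_period]
  push_cast
  ring

/-- `r` is a good rotation. -/
def G (n : ℕ) (a : Fin n → ZMod (n + 1)) (r : ℕ) : Prop :=
  ∀ k, 1 ≤ k → k ≤ n → S n a r ≤ S n a (r + k)

lemma cycle_lemma (a : Fin n → ZMod (n + 1)) :
    ∃! r : ℕ, r < n + 1 ∧ G n a r := by
  classical
  have hex : ∃ r : ℕ, r < (n+1) ∧ ∀ t < (n+1), S n a r ≤ S n a t := by
    obtain ⟨r, hr, hmin⟩ := Finset.exists_min_image (Finset.range (n+1)) (S n a)
      ⟨0, Finset.mem_range.mpr (by omega)⟩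
    exact ⟨r, Finset.mem_range.mp hr, fun t ht => hmin t (Finset.mem_range.mpr ht)⟩
  have hex' : ∃ r : ℕ, ∀ t < (n+1), S n a r ≤ S n a t := ⟨hex.choose, hex.choose_spec.2⟩
  obtain ⟨r₀, hr₀N, hP, hmin⟩ :
      ∃ r, r < (n+1) ∧ (∀ t < (n+1), S n a r ≤ S n a t) ∧ ∀ j < r, ∃ t < (n+1), S n a t < S n a j := by
    refine ⟨Nat.find hex', lt_of_le_of_lt (Nat.find_min' hex' hex.choose_spec.2)
      hex.choose_spec.1, Nat.find_spec hex', fun j hj => ?_⟩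
    have := Nat.find_min hex' hj
    push_neg at this
    exact this
  have hbefore : ∀ j < r₀, S n a r₀ + 1 ≤ S n a j := by
    intro j hj
    obtain ⟨t, ht, hlt⟩ := hmin j hj
    have := hP t ht
    omega
  refine ⟨r₀, ⟨hr₀N, ?_⟩, ?_⟩
  · intro k hk1 hkn
    rcases Nat.lt_or_ge (r₀ + k) (n+1) with h | h
    · exact hP _ h
    · have ht : r₀ + k = (r₀ + k - (n+1)) + (n+1) := by omega
      rw [ht, S_period]
      have h1 : r₀ + k - (n+1) < r₀ := by omega
      have := hbefore _ h1
      omega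
  · rintro r' ⟨hr'N, hG'⟩
    by_contra hne
    rcases Nat.lt_or_ge r' r₀ with h | h
    · have h1 := hG' (r₀ - r') (by omega) (by omega)
      rw [show r' + (r₀ - r') = r₀ by omega] at h1
      have := hbefore r' h
      omega
    · have hgt : r₀ < r' := by omega
      have h1 := hG' (r₀ + (n+1) - r') (by omega) (by omega)
      rw [show r' + (r₀ + (n+1) - r') = r₀ + (n+1) by omega, S_period] at h1
      have := hP r' hr'N
      omega


lemma Q_shift_iff (b : Fin n → ZMod (n + 1)) (c : ZMod (n + 1)) :
    Q n (fun j => b j - c) ↔ G n b c.val := by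
  have hc : ((c.val : ℕ) : ZMod (n + 1)) = c := by
    rw [ZMod.natCast_val, ZMod.cast_id]
  have key : ∀ k, k ≤ n + 1 →
      C n b (c.val + k) = C n b c.val
        + (Finset.univ.filter (fun j => (b j - c).val < k)).card := by
    intro k hk
    rw [arc b c.val k hk, hc]
  constructor
  · intro h k hk1 hkn
    have h1 := h k hk1 hkn
    beta_reduce at h1
    have h2 := key k (by omega)
    rw [S, S]
    push_cast
    omega
  · intro h k hk1 hkn
    have h1 := h k hk1 hkn
    have h2 := key k (by omega)
    rw [S, S] at h1
    push_cast at h1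
    beta_reduce
    omega

lemma exists_unique_shift (b : Fin n → ZMod (n + 1)) :
    ∃! c : ZMod (n + 1), Q n (fun j => b j - c) := by
  obtain ⟨r, ⟨hrN, hG⟩, huniq⟩ := cycle_lemma b
  refine ⟨(r : ZMod (n + 1)), ?_, ?_⟩
  · show Q n fun j => b j - ((r : ℕ) : ZMod (n + 1))
    rw [Q_shift_iff, ZMod.val_cast_of_lt hrN]
    exact hG
  · intro c hc
    rw [Q_shift_iff] at hc
    have := huniq c.val ⟨ZMod.val_lt c, hc⟩
    rw [← this, ZMod.natCast_val, ZMod.cast_id]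

lemma card_Q (hn : 1 ≤ n) :
    Nat.card {a : Fin n → ZMod (n + 1) // Q n a} = (n + 1) ^ (n - 1) := by
  classical
  have hdec : DecidablePred (Q n) := fun _ => Classical.dec _
  set f : ZMod (n + 1) × {a : Fin n → ZMod (n + 1) // Q n a} → (Fin n → ZMod (n + 1)) :=
    fun p => fun j => p.2.1 j + p.1 with hf
  have hbij : Function.Bijective f := by
    constructor
    · rintro ⟨c, a, ha⟩ ⟨c', a', ha'⟩ heq
      obtain ⟨c₀, hc₀, huniq⟩ := exists_unique_shift (fun j => a j + c)
      have e1 : (fun j => (a j + c) - c) = a := by funext j; ring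
      have e2 : (fun j => (a j + c) - c') = a' := by
        funext j
        have := congrFun heq j
        simp only [hf] at this
        rw [this]; ring
      have hc : c = c₀ := huniq c (by
        show Q n fun j => a j + c - c
        rw [e1]; exact ha)
      have hc' : c' = c₀ := huniq c' (by
        show Q n fun j => a j + c - c'
        rw [e2]; exact ha')
      have hcc : c = c' := by rw [hc, hc']
      subst hcc
      have : a = a' := by
        funext j
        have := congrFun heq j
        simpa [hf] using this
      simp [this]
    · intro b
      obtain ⟨c, hc, -⟩ := exists_unique_shift b
      refine ⟨⟨c, ⟨fun j => b j - c, hc⟩⟩, ?_⟩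
      funext j
      simp [hf]
  have hcard := Nat.card_congr (Equiv.ofBijective f hbij)
  rw [Nat.card_prod, Nat.card_eq_fintype_card (α := ZMod (n+1)),
    Nat.card_eq_fintype_card (α := Fin n → ZMod (n+1)), ZMod.card,
    Fintype.card_fun, ZMod.card, Fintype.card_fin] at hcard
  have hp : (n + 1) ^ n = (n + 1) * (n + 1) ^ (n - 1) := by
    obtain ⟨m, rfl⟩ : ∃ m, n = m + 1 := ⟨n - 1, by omega⟩
    rw [pow_succ, Nat.add_sub_cancel]
    ring
  rw [hp] at hcard
  exact Nat.eq_of_mul_eq_mul_left (by omega) hcard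


lemma length_filter_ofFn {α : Type*} (p : α → Bool) :
    ∀ m (f : Fin m → α), ((List.ofFn f).filter p).length
      = (Finset.univ.filter (fun j => p (f j) = true)).card := by
  intro m
  induction m with
  | zero => simp
  | succ m ih =>
    intro f
    rw [List.ofFn_succ, List.filter_cons, Finset.card_filter, Fin.sum_univ_succ,
      ← Finset.card_filter, ← ih (fun j => f j.succ)]
    by_cases h : p (f 0) = true <;> simp [h] <;> omega

end PFAux


set_option maxHeartbeats 1000000 in
/-- For every `n ≥ 1`, the number of parking functions of length `n`
is `(n+1)^(n-1)`. -/
theorem card_parkingFunctions (n : ℕ) (hn : 1 ≤ n) :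
    Set.ncard {w : List ℕ | w.length = n ∧ IsParkingFunction w} = (n + 1) ^ (n - 1) := by
  classical
  set Spf := {w : List ℕ | w.length = n ∧ IsParkingFunction w} with hSpf
  set g : {a : Fin n → ZMod (n + 1) // PFAux.Q n a} → ↥Spf := fun a =>
    ⟨List.ofFn (fun j => (a.1 j).val + 1), by
      constructor
      · simp
      constructor
      · intro x hx
        rw [List.mem_ofFn] at hx
        obtain ⟨j, hj⟩ := hx
        have hj' : (a.1 j).val + 1 = x := hj
        omega
      · intro i hi1 hi2
        rw [List.length_ofFn] at hi2
        rw [PFAux.length_filter_ofFn]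
        have hcong : Finset.univ.filter (fun j : Fin n => decide ((a.1 j).val + 1 ≤ i) = true)
            = Finset.univ.filter (fun j : Fin n => (a.1 j).val < i) := by
          apply Finset.filter_congr
          intro j _
          simp only [decide_eq_true_eq]; omega
        rw [hcong]
        exact a.2 i hi1 hi2⟩ with hg
  have hginj : Function.Injective g := by
    rintro ⟨a, ha⟩ ⟨a', ha'⟩ heq
    simp only [hg, Subtype.mk.injEq] at heq
    have h2 := List.ofFn_injective heq
    simp only [Subtype.mk.injEq]
    funext j
    apply ZMod.val_injective
    have := congrFun h2 j
    omega
  have hgsurj : Function.Surjective g := by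
    rintro ⟨w, hw⟩
    obtain ⟨hlen, hpf⟩ := hw
    subst hlen
    have hall : ∀ x ∈ w, x ≤ w.length := by
      have h1 := hpf.2 w.length hn le_rfl
      have h2 : (w.filter (fun x => x ≤ w.length)).length ≤ w.length :=
        List.length_filter_le _ _
      have heq : (w.filter (fun x => decide (x ≤ w.length))).length = w.length := by omega
      have hfe := (List.filter_sublist (l := w)
        (p := fun x => decide (x ≤ w.length))).eq_of_length heq
      rw [List.filter_eq_self] at hfe
      intro x hx
      simpa using hfe x hx
    set a : Fin w.length → ZMod (w.length + 1) :=
      fun j => ((w.get j - 1 : ℕ) : ZMod (w.length + 1)) with ha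
    have hval : ∀ j, (a j).val = w.get j - 1 := by
      intro j
      apply ZMod.val_cast_of_lt
      have : w.get j ∈ w := w.get_mem j
      have := hall _ this
      omega
    have hQ : PFAux.Q w.length a := by
      intro k hk1 hkn
      have h1 := hpf.2 k hk1 hkn
      conv at h1 => rw [show w = List.ofFn w.get from (List.ofFn_get w).symm]
      rw [PFAux.length_filter_ofFn] at h1
      have hcong : Finset.univ.filter (fun j : Fin w.length => decide (w.get j ≤ k) = true)
          = Finset.univ.filter (fun j : Fin w.length => (a j).val < k) := by
        apply Finset.filter_congr
        intro j _
        have hmem : w.get j ∈ w := w.get_mem j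
        have h2 := hpf.1 _ hmem
        have h3 := hval j
        simp only [decide_eq_true_eq]
        constructor
        · intro h
          omega
        · intro h
          omega
      rw [hcong] at h1
      exact h1
    refine ⟨⟨a, hQ⟩, ?_⟩
    apply Subtype.ext
    show List.ofFn (fun j => (a j).val + 1) = w
    apply List.ext_get (by simp)
    intro i h1 h2
    rw [List.get_ofFn]
    have hge : 1 ≤ w.get ⟨i, h2⟩ := hpf.1 _ (w.get_mem ⟨i, h2⟩)
    have h3 := hval ⟨i, h2⟩
    have hc : (Fin.cast (by simp : (List.ofFn (fun j => (a j).val + 1)).length = w.length)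
        ⟨i, h1⟩ : Fin w.length) = ⟨i, h2⟩ := by
      ext
      simp
    rw [hc, h3]
    omega
  rw [← Nat.card_coe_set_eq,
    Nat.card_congr (Equiv.ofBijective g ⟨hginj, hgsurj⟩).symm]
  exact PFAux.card_Q hn
end

section
/- For every n ≥ 2, the number of prime parking functions of length n is (n-1)^{n-1}. -/
/-- `b` is a breakpoint of the word `w` if exactly `b` letters of `w` are `≤ b`. -/
def IsBreakpoint (w : List ℕ) (b : ℕ) : Prop :=
  (w.filter (fun x => x ≤ b)).length = b

/-- A parking function is prime if its only breakpoints are the trivial ones,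
`0` and its length. -/
def IsPrimeParkingFunction (w : List ℕ) : Prop :=
  IsParkingFunction w ∧ ∀ b, IsBreakpoint w b → b = 0 ∨ b = w.length

open Finset



lemma card_filter_ofFn : ∀ {n : ℕ} (f : Fin n → ℕ) (p : ℕ → Bool),
    ((List.ofFn f).filter p).length = (univ.filter fun j => p (f j)).card := by
  intro n
  induction n with
  | zero => intro f p; simp
  | succ n ih =>
    intro f p
    rw [List.ofFn_succ, List.filter_cons]
    have hcard : (univ.filter fun j : Fin (n+1) => p (f j)).card
        = (if p (f 0) then 1 else 0) + (univ.filter fun j : Fin n => p (f j.succ)).card := by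
      rw [Finset.card_filter, Finset.card_filter, Fin.sum_univ_succ]
    rw [hcard, ← ih (fun j => f j.succ) p]
    by_cases h : p (f 0) <;> simp [h] <;> omega

lemma cycle_exists_unique (m : ℕ) (hm : 0 < m) (S : ℕ → ℤ) (hS : ∀ a, S (a + m) = S a + 1) :
    ∃! r, r < m ∧ ∀ s, r < s → s ≤ r + m → S r < S s := by
  have hne : ((Finset.range m).image S).Nonempty := by
    simp only [Finset.image_nonempty]
    exact ⟨0, Finset.mem_range.mpr hm⟩
  set M := ((Finset.range m).image S).min' hne with hM
  have hF : ((Finset.range m).filter (fun a => S a = M)).Nonempty := by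
    obtain ⟨a, ha, hsa⟩ := Finset.mem_image.mp (Finset.min'_mem _ hne)
    exact ⟨a, Finset.mem_filter.mpr ⟨ha, hsa⟩⟩
  set r := ((Finset.range m).filter (fun a => S a = M)).max' hF with hrdef
  have hrmem := Finset.max'_mem _ hF
  have hr : r < m := Finset.mem_range.mp (Finset.mem_filter.mp hrmem).1
  have hSr : S r = M := (Finset.mem_filter.mp hrmem).2
  have hmin : ∀ a, a < m → M ≤ S a := fun a ha =>
    Finset.min'_le _ _ (Finset.mem_image_of_mem S (Finset.mem_range.mpr ha))
  have hmax : ∀ a, a < m → S a = M → a ≤ r := fun a ha hsa =>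
    Finset.le_max' _ a (Finset.mem_filter.mpr ⟨Finset.mem_range.mpr ha, hsa⟩)
  have hgood : ∀ s, r < s → s ≤ r + m → S r < S s := by
    intro s hs1 hs2
    by_cases h : s < m
    · rcases lt_or_eq_of_le (hmin s h) with h' | h'
      · rw [hSr]; exact h'
      · exact absurd (hmax s h h'.symm) (by omega)
    · have h1 : s - m < m := by omega
      have h2 : S s = S (s - m) + 1 := by
        have := hS (s - m); rwa [Nat.sub_add_cancel (by omega)] at this
      have h3 := hmin (s - m) h1
      rw [h2, hSr]; linarith
  -- uniqueness helper
  have key : ∀ r1 r2, r1 < m → r2 < m →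
      (∀ s, r1 < s → s ≤ r1 + m → S r1 < S s) →
      (∀ s, r2 < s → s ≤ r2 + m → S r2 < S s) → r1 < r2 → False := by
    intro r1 r2 h1 h2 g1 g2 hlt
    have a1 : S r1 < S r2 := g1 r2 hlt (by omega)
    have a2 : S r2 < S (r1 + m) := g2 (r1 + m) (by omega) (by omega)
    rw [hS r1] at a2
    omega
  refine ⟨r, ⟨hr, hgood⟩, ?_⟩
  rintro r' ⟨hr', hgood'⟩
  rcases Nat.lt_trichotomy r' r with h | h | h
  · exact absurd (key r' r hr' hr hgood' hgood h) (fun x => x)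
  · exact h
  · exact absurd (key r r' hr hr' hgood hgood' h) (fun x => x)



variable {m n : ℕ} [NeZero m]

lemma cast_val_self (x : ZMod m) : ((x.val : ℕ) : ZMod m) = x :=
  ZMod.natCast_rightInverse x

lemma sum_fiber (g : Fin n → ZMod m) :
    ∑ v : ZMod m, (univ.filter fun j => g j = v).card = n := by
  have := Finset.card_eq_sum_card_fiberwise (f := g) (s := univ) (t := univ)
    (fun x _ => mem_univ _)
  simpa using this.symm

lemma sum_window (c : ZMod m → ℕ) (a : ℕ) :
    ∑ i ∈ Finset.range m, c ((a + i : ℕ) : ZMod m) = ∑ v : ZMod m, c v := by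
  have left : ∀ v : ZMod m, ((a + (v - (a:ℕ)).val : ℕ) : ZMod m) = v := by
    intro v; push_cast [cast_val_self]; ring
  refine Finset.sum_nbij' (fun i => ((a + i : ℕ) : ZMod m)) (fun v => (v - (a : ℕ)).val)
    (fun i _ => mem_univ _) (fun v _ => Finset.mem_range.mpr (ZMod.val_lt _)) ?_ ?_ ?_
  · intro i hi
    have hi' : i < m := Finset.mem_range.mp hi
    show (((a + i : ℕ) : ZMod m) - (a : ℕ)).val = i
    have : ((a + i : ℕ) : ZMod m) - (a : ℕ) = ((i : ℕ) : ZMod m) := by push_cast; ring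
    rw [this, ZMod.val_natCast_of_lt hi']
  · intro v _
    exact left v
  · intro i _; rfl

lemma shift_count (g : Fin n → ZMod m) (k : ZMod m) (t : ℕ) (ht : t < m) :
    (univ.filter fun j => (g j + k).val ≤ t).card
      = ∑ i ∈ Finset.range (t+1),
          (univ.filter fun j => g j = (((-k).val + i : ℕ) : ZMod m)).card := by
  have key1 : ∀ i : ℕ, ((((-k).val + i : ℕ) : ZMod m) + k) = ((i : ℕ) : ZMod m) := by
    intro i; push_cast [cast_val_self]; ring
  have left : ∀ v : ZMod m, ((((-k).val + (v + k).val : ℕ)) : ZMod m) = v := by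
    intro v; push_cast [cast_val_self]; ring
  have h1 := Finset.card_eq_sum_card_fiberwise (f := g)
    (s := univ.filter fun j => (g j + k).val ≤ t)
    (t := univ.filter fun v : ZMod m => (v + k).val ≤ t)
    (fun j hj => by simp at hj ⊢; exact hj)
  rw [h1]
  have h2 : ∀ v ∈ univ.filter fun v : ZMod m => (v + k).val ≤ t,
      ((univ.filter fun j => (g j + k).val ≤ t).filter fun j => g j = v).card
        = (univ.filter fun j => g j = v).card := by
    intro v hv
    simp only [Finset.mem_filter, Finset.mem_univ, true_and] at hv
    congr 1
    ext j
    simp only [Finset.mem_filter, Finset.mem_univ, true_and]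
    constructor
    · rintro ⟨_, h⟩; exact h
    · intro h; exact ⟨by rw [h]; exact hv, h⟩
  rw [Finset.sum_congr rfl h2]
  refine Finset.sum_nbij' (fun v => (v + k).val) (fun i => (((-k).val + i : ℕ) : ZMod m))
    ?_ ?_ ?_ ?_ ?_
  · intro v hv
    simp only [Finset.mem_filter, Finset.mem_univ, true_and] at hv
    show (v + k).val ∈ Finset.range (t+1)
    exact Finset.mem_range.mpr (by omega)
  · intro i hi
    have hi' : i < t + 1 := Finset.mem_range.mp hi
    simp only [Finset.mem_filter, Finset.mem_univ, true_and]
    rw [key1 i, ZMod.val_natCast_of_lt (by omega)]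
    omega
  · intro v hv
    exact left v
  · intro i hi
    have hi' : i < t + 1 := Finset.mem_range.mp hi
    show ((((-k).val + i : ℕ) : ZMod m) + k).val = i
    rw [key1 i, ZMod.val_natCast_of_lt (by omega)]
  · intro v hv
    show _ = (univ.filter fun j => g j = (((-k).val + (v + k).val : ℕ) : ZMod m)).card
    rw [left v]

def Good (m n : ℕ) (g : Fin n → ZMod m) : Prop :=
  ∀ t, t < m → t + 2 ≤ (univ.filter fun j => (g j).val ≤ t).card

variable {m n : ℕ} [NeZero m]

lemma exists_unique_shift (hm : m ≠ 0) (hn : n = m + 1) (g : Fin n → ZMod m) :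
    ∃! k : ZMod m, Good m n (fun j => g j + k) := by
  set c : ZMod m → ℕ := fun v => (univ.filter fun j => g j = v).card with hc
  set A : ℕ → ℕ := fun a => ∑ i ∈ Finset.range a, c ((i : ℕ) : ZMod m) with hA
  set S : ℕ → ℤ := fun a => (A a : ℤ) - a with hSdef
  have hAper : ∀ a, A (a + m) = A a + n := by
    intro a
    show (∑ i ∈ Finset.range (a + m), c ((i : ℕ) : ZMod m)) = _
    rw [Finset.sum_range_add]
    have := sum_window (m := m) c a
    rw [this, sum_fiber g]
  have hSper : ∀ a, S (a + m) = S a + 1 := by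
    intro a
    show (A (a + m) : ℤ) - (a + m : ℕ) = (A a : ℤ) - a + 1
    rw [hAper a]
    push_cast
    omega
  have hAadd : ∀ r t, A (r + t) = A r + ∑ i ∈ Finset.range t, c (((r + i : ℕ)) : ZMod m) := by
    intro r t
    exact Finset.sum_range_add _ r t
  have cond_iff : ∀ k : ZMod m, (Good m n (fun j => g j + k) ↔
      ∀ s, (-k).val < s → s ≤ (-k).val + m → S ((-k).val) < S s) := by
    intro k
    set r := (-k).val with hr
    have hrm : r < m := ZMod.val_lt _
    constructor
    · intro hG s hs1 hs2
      set t := s - r - 1 with ht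
      have hst : s = r + (t + 1) := by omega
      have htm : t < m := by omega
      have h1 := hG t htm
      rw [shift_count g k t htm] at h1
      have h1' : t + 2 ≤ ∑ i ∈ Finset.range (t+1), c (((r + i : ℕ)) : ZMod m) := by
        rw [hr]; exact h1
      have h2 := hAadd r (t + 1)
      show (A r : ℤ) - r < (A s : ℤ) - s
      rw [hst, h2]
      omega
    · intro hSg t htm
      rw [shift_count g k t htm]
      have h2 := hAadd r (t + 1)
      have h3 := hSg (r + (t + 1)) (by omega) (by omega)
      have h4 : (A (r + (t+1)) : ℤ) - ((r + (t+1) : ℕ) : ℤ) > (A r : ℤ) - (r : ℤ) := h3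
      rw [h2] at h4
      have goal' : t + 2 ≤ ∑ i ∈ Finset.range (t+1), c (((r + i : ℕ)) : ZMod m) := by omega
      rw [hr] at goal'
      exact goal'
  obtain ⟨r, ⟨hrm, hrgood⟩, hruniq⟩ := cycle_exists_unique m (Nat.pos_of_ne_zero hm) S hSper
  refine ⟨-((r : ℕ) : ZMod m), ?_, ?_⟩
  · have hval : (-(-((r : ℕ) : ZMod m))).val = r := by
      rw [neg_neg, ZMod.val_natCast_of_lt hrm]
    exact (cond_iff _).mpr (by rw [hval]; exact hrgood)
  · intro k hk
    rw [cond_iff] at hk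
    have h5 : (-k).val = r := hruniq _ ⟨ZMod.val_lt _, hk⟩
    have h6 : (((-k).val : ℕ) : ZMod m) = -k := cast_val_self _
    rw [h5] at h6
    rw [h6, neg_neg]

lemma card_good (hm : m ≠ 0) (hn : n = m + 1) :
    Nat.card {g : Fin n → ZMod m // Good m n g} = m ^ m := by
  classical
  subst hn
  have H : ∀ g : Fin (m+1) → ZMod m, ∃! k : ZMod m, Good m (m+1) (fun j => g j + k) :=
    exists_unique_shift hm rfl
  have E : (Fin (m+1) → ZMod m) ≃ {g : Fin (m+1) → ZMod m // Good m (m+1) g} × ZMod m :=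
    { toFun := fun g => (⟨fun j => g j + (H g).choose, (H g).choose_spec.1⟩, (H g).choose)
      invFun := fun p => fun j => p.1.1 j - p.2
      left_inv := by
        intro g
        funext j
        simp
      right_inv := by
        rintro ⟨⟨h, ph⟩, k⟩
        have hgh : (fun j => h j - k + k) = h := by funext j; simp
        have hk : (H (fun j => h j - k)).choose = k := by
          have := (H (fun j => h j - k)).choose_spec.2 k
            (show Good m (m+1) (fun j => h j - k + k) by rw [hgh]; exact ph)
          exact this.symm
        ext j
        · show (fun j => h j - k) j + (H (fun j => h j - k)).choose = h j
          rw [hk]; simp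
        · exact hk }
  have h1 : Nat.card (Fin (m+1) → ZMod m) = m ^ (m+1) := by
    rw [Nat.card_eq_fintype_card, Fintype.card_fun, ZMod.card, Fintype.card_fin]
  have h2 : Nat.card (Fin (m+1) → ZMod m)
      = Nat.card {g : Fin (m+1) → ZMod m // Good m (m+1) g} * m := by
    rw [Nat.card_congr E, Nat.card_prod, Nat.card_eq_fintype_card (α := ZMod m), ZMod.card]
  rw [h1, pow_succ] at h2
  exact (Nat.eq_of_mul_eq_mul_right (Nat.pos_of_ne_zero hm) h2.symm)

lemma ppf_iff {n m : ℕ} (hm : 1 ≤ m) (hn : n = m + 1) {w : List ℕ} (hw : w.length = n) :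
    IsPrimeParkingFunction w ↔
      ((∀ x ∈ w, 1 ≤ x ∧ x ≤ m) ∧
        ∀ i, 1 ≤ i → i ≤ m → i + 1 ≤ (w.filter (fun x => x ≤ i)).length) := by
  constructor
  · rintro ⟨⟨hpos, hpf⟩, hprime⟩
    have key : ∀ i, 1 ≤ i → i ≤ m → i + 1 ≤ (w.filter (fun x => x ≤ i)).length := by
      intro i h1 h2
      have hi := hpf i h1 (by omega)
      rcases Nat.eq_or_lt_of_le hi with h | h
      · rcases hprime i h.symm with h' | h' <;> omega
      · omega
    refine ⟨?_, key⟩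
    have h1 : m + 1 ≤ (w.filter (fun x => x ≤ m)).length := key m hm le_rfl
    have h2 : (w.filter (fun x => x ≤ m)).length ≤ w.length := List.length_filter_le _ _
    have h3 : (w.filter (fun x => x ≤ m)).length = w.length := by omega
    have h4 := List.length_filter_eq_length_iff.mp h3
    intro x hx
    have := h4 x hx
    simp at this
    exact ⟨hpos x hx, this⟩
  · rintro ⟨hent, hcond⟩
    refine ⟨⟨fun x hx => (hent x hx).1, ?_⟩, ?_⟩
    · intro i h1 h2
      by_cases h : i ≤ m
      · have := hcond i h1 h; omega
      · have hfl : (w.filter (fun x => x ≤ i)).length = w.length :=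
          List.length_filter_eq_length_iff.mpr (by
            intro x hx
            simp only [decide_eq_true_eq]
            have := (hent x hx).2
            omega)
        omega
    · intro b hb
      unfold IsBreakpoint at hb
      by_cases hb0 : b = 0
      · left; exact hb0
      right
      by_cases hbm : b ≤ m
      · have := hcond b (by omega) hbm; omega
      · have hle := List.length_filter_le (fun x => decide (x ≤ b)) w
        omega

lemma image_eq {m n : ℕ} [NeZero m] (hm : m ≠ 0) (hn : n = m + 1) :
    {w : List ℕ | w.length = n ∧ IsPrimeParkingFunction w}
      = (fun g : Fin n → ZMod m => List.ofFn (fun j => (g j).val + 1)) '' {g | Good m n g} := by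
  have hm1 : 1 ≤ m := Nat.one_le_iff_ne_zero.mpr hm
  ext w
  simp only [Set.mem_setOf_eq, Set.mem_image]
  constructor
  · rintro ⟨hlen, hppf⟩
    rw [ppf_iff hm1 hn hlen] at hppf
    obtain ⟨hent, hcond⟩ := hppf
    set f : Fin n → ℕ := fun j => w.get (Fin.cast hlen.symm j) with hf
    have hweq : List.ofFn f = w := by
      conv_rhs => rw [← List.ofFn_get w]
      exact (List.ofFn_congr hlen w.get).symm
    have hget : ∀ j : Fin n, 1 ≤ f j ∧ f j ≤ m := fun j => hent _ (w.get_mem _)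
    refine ⟨fun j => ((f j - 1 : ℕ) : ZMod m), ?_, ?_⟩
    · -- Good
      intro t ht
      have hval : ∀ j : Fin n, (((f j - 1 : ℕ) : ZMod m)).val = f j - 1 := by
        intro j
        exact ZMod.val_natCast_of_lt (by have := hget j; omega)
      have hfe : (univ.filter fun j : Fin n => (((f j - 1 : ℕ) : ZMod m)).val ≤ t)
          = (univ.filter fun j : Fin n => (decide (f j ≤ t + 1) : Bool)) := by
        ext j
        simp only [Finset.mem_filter, Finset.mem_univ, true_and, hval j,
          decide_eq_true_eq]
        have := hget j
        omega
      show t + 2 ≤ _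
      rw [hfe, ← card_filter_ofFn f (fun x => decide (x ≤ t + 1)), hweq]
      exact hcond (t+1) (by omega) (by omega)
    · -- ofFn eq w
      rw [← hweq]
      congr 1
      funext j
      have hval : (((f j - 1 : ℕ) : ZMod m)).val = f j - 1 :=
        ZMod.val_natCast_of_lt (by have := hget j; omega)
      rw [hval]
      have := hget j
      omega
  · rintro ⟨g, hg, rfl⟩
    have hlen : (List.ofFn fun j => (g j).val + 1).length = n := by simp
    refine ⟨hlen, ?_⟩
    rw [ppf_iff hm1 hn hlen]
    constructor
    · intro x hx
      rw [List.mem_ofFn] at hx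
      obtain ⟨j, rfl⟩ := hx
      have := ZMod.val_lt (g j)
      refine ⟨?_, ?_⟩
      · show 1 ≤ (g j).val + 1
        omega
      · show (g j).val + 1 ≤ m
        omega
    · intro i h1 h2
      rw [card_filter_ofFn (fun j => (g j).val + 1) (fun x => decide (x ≤ i))]
      have := hg (i - 1) (by omega)
      have hfe : (univ.filter fun j : Fin n => (decide ((g j).val + 1 ≤ i) : Bool))
          = (univ.filter fun j : Fin n => (g j).val ≤ i - 1) := by
        ext j
        simp only [Finset.mem_filter, Finset.mem_univ, true_and, decide_eq_true_eq]
        omega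
      rw [hfe]
      omega

/-- For every `n ≥ 2`, the number of prime parking functions of length `n`
is `(n-1)^(n-1)`. -/
theorem card_primeParkingFunctions (n : ℕ) (hn : 2 ≤ n) :
    Set.ncard {w : List ℕ | w.length = n ∧ IsPrimeParkingFunction w}
      = (n - 1) ^ (n - 1) := by
  set m := n - 1 with hm'
  have hm : m ≠ 0 := by omega
  have hn' : n = m + 1 := by omega
  haveI : NeZero m := ⟨hm⟩
  rw [image_eq hm hn']
  have hinj : Function.Injective
      (fun g : Fin n → ZMod m => List.ofFn (fun j => (g j).val + 1)) := by
    intro g g' h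
    simp only at h
    have h2 := List.ofFn_injective h
    funext j
    have h3 : (g j).val + 1 = (g' j).val + 1 := congrFun h2 j
    exact ZMod.val_injective m (by omega)
  rw [Set.ncard_image_of_injective _ hinj, ← Nat.card_coe_set_eq]
  exact card_good hm hn'
end

section
/- For every n ≥ 1, the map sending a nondecreasing parking function π of length n−1 to the word 1·π (the letter 1 prepended to π) is a bijection from the set of nondecreasing parking functions of length n−1 onto the set of nondecreasing prime parking functions of length n; consequently the number of nondecreasing prime parking functions of length n is the Catalan number C_{n-1} = binom(2n-2,n-1)/n. -/
open List DyckStep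

namespace PPFAux

/-! ### Counting lemmas about filters -/

lemma filter_le_succ (w : List ℕ) (i : ℕ) :
    (w.filter (fun x => x ≤ i + 1)).length
      = (w.filter (fun x => x ≤ i)).length + w.count (i + 1) := by
  induction w with
  | nil => simp
  | cons a t ih =>
    rw [List.filter_cons, List.filter_cons, List.count_cons]
    by_cases h1 : a ≤ i
    · have h2 : a ≤ i + 1 := by omega
      have h3 : ¬ (a = i + 1) := by omega
      simp only [decide_eq_true h1, decide_eq_true h2, if_true, beq_iff_eq, if_neg h3, length_cons]
      omega
    · by_cases h2 : a = i + 1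
      · have h2' : a ≤ i + 1 := by omega
        simp only [decide_eq_false h1, decide_eq_true h2', Bool.false_eq_true, if_false,
          if_true, beq_iff_eq, if_pos h2, length_cons]
        omega
      · have h3 : ¬ (a ≤ i + 1) := by omega
        simp only [decide_eq_false h1, decide_eq_false h3, Bool.false_eq_true, if_false, beq_iff_eq,
          if_neg h2]
        omega

lemma filter_le_zero (w : List ℕ) (hw : ∀ x ∈ w, 1 ≤ x) :
    (w.filter (fun x => x ≤ 0)) = [] := by
  rw [List.filter_eq_nil_iff]
  intro a ha
  simp only [decide_eq_true_eq]
  have := hw a ha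
  omega

/-- The counts vector of a word. -/
def counts (w : List ℕ) (m : ℕ) : List ℕ := (List.range m).map fun j => w.count (j + 1)

lemma sum_counts (w : List ℕ) (hw : ∀ x ∈ w, 1 ≤ x) (j : ℕ) :
    (counts w j).sum = (w.filter (fun x => x ≤ j)).length := by
  induction j with
  | zero =>
    simp only [counts, List.range_zero, List.map_nil, List.sum_nil,
      filter_le_zero w hw, List.length_nil]
  | succ j ih =>
    rw [counts, List.range_succ, List.map_append, List.sum_append, filter_le_succ]
    simp [counts] at ih ⊢
    omega

lemma pf_le_length {w : List ℕ} (hw : IsParkingFunction w) : ∀ x ∈ w, x ≤ w.length := by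
  rcases eq_or_ne w [] with rfl | hne
  · simp
  · have hlen : 1 ≤ w.length := List.length_pos_iff.mpr hne
    have h1 := hw.2 w.length hlen le_rfl
    have h2 : (w.filter (fun x => x ≤ w.length)).length ≤ w.length :=
      List.length_filter_le _ _
    have h3 : w.filter (fun x => x ≤ w.length) = w :=
      (List.filter_sublist (l := w)).eq_of_length (le_antisymm h2 h1)
    intro x hx
    rw [← h3] at hx
    simpa using List.of_mem_filter hx

lemma filter_eq_self_of_pf {w : List ℕ} (hw : IsParkingFunction w) {i : ℕ}
    (hi : w.length ≤ i) : w.filter (fun x => x ≤ i) = w := by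
  rw [List.filter_eq_self]
  intro a ha
  simpa using le_trans (pf_le_length hw a ha) hi

/-! ### fromCounts -/

/-- The sorted word with counts vector `c`, starting from value `v`. -/
def fromCounts : ℕ → List ℕ → List ℕ
  | _, [] => []
  | v, c :: cs => List.replicate c v ++ fromCounts (v + 1) cs

lemma length_fromCounts : ∀ (c : List ℕ) (v : ℕ), (fromCounts v c).length = c.sum
  | [], v => rfl
  | c :: cs, v => by simp [fromCounts, length_fromCounts cs (v + 1)]

lemma mem_fromCounts : ∀ (c : List ℕ) (v x : ℕ), x ∈ fromCounts v c →
    v ≤ x ∧ x < v + c.length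
  | [], v, x => by simp [fromCounts]
  | c :: cs, v, x => by
    intro hx
    rw [fromCounts, List.mem_append] at hx
    rcases hx with hx | hx
    · have := List.eq_of_mem_replicate hx
      subst this
      simp
    · have := mem_fromCounts cs (v + 1) x hx
      constructor <;> [omega; (simp only [List.length_cons]; omega)]

lemma sorted_fromCounts : ∀ (c : List ℕ) (v : ℕ), List.Pairwise (· ≤ ·) (fromCounts v c)
  | [], v => by simp [fromCounts]
  | c :: cs, v => by
    rw [fromCounts, List.pairwise_append]
    refine ⟨by simp [List.pairwise_replicate], sorted_fromCounts cs (v + 1), ?_⟩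
    intro x hx y hy
    have hx' := List.eq_of_mem_replicate hx
    have hy' := (mem_fromCounts cs (v + 1) y hy).1
    omega

lemma filter_fromCounts : ∀ (c : List ℕ) (v i : ℕ),
    ((fromCounts v c).filter (fun x => x ≤ i)).length = (c.take (i + 1 - v)).sum
  | [], v, i => by simp [fromCounts]
  | c :: cs, v, i => by
    rw [fromCounts, List.filter_append, List.length_append, List.filter_replicate,
      filter_fromCounts cs (v + 1) i]
    by_cases h : v ≤ i
    · have : i + 1 - v = (i - v) + 1 := by omega
      rw [this]
      have : i + 1 - (v + 1) = i - v := by omega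
      rw [this]
      simp [h]
    · have h1 : i + 1 - v = 0 := by omega
      have h2 : i + 1 - (v + 1) = 0 := by omega
      rw [h1, h2]
      simp [h]

lemma count_fromCounts (c : List ℕ) (j : ℕ) (hj : j < c.length) :
    (fromCounts 1 c).count (j + 1) = c.get ⟨j, hj⟩ := by
  have h1 := filter_fromCounts c 1 (j + 1)
  have h2 := filter_fromCounts c 1 j
  have h3 := filter_le_succ (fromCounts 1 c) j
  have h4 := List.sum_take_succ c j hj
  simp only [Nat.add_sub_cancel] at h1 h2
  simp only [List.get_eq_getElem]
  omega

/-! ### blocks -/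

/-- The Dyck-step list with `c j` up-steps before the `j`-th down-step. -/
def blocks : List ℕ → List DyckStep
  | [] => []
  | c :: cs => List.replicate c U ++ D :: blocks cs

lemma count_U_blocks : ∀ c : List ℕ, (blocks c).count U = c.sum
  | [] => rfl
  | c :: cs => by simp [blocks, count_U_blocks cs, List.count_replicate]

lemma count_D_blocks : ∀ c : List ℕ, (blocks c).count D = c.length
  | [] => rfl
  | c :: cs => by simp [blocks, count_D_blocks cs, List.count_replicate]

lemma rep_cons_inj : ∀ (a b : ℕ) (x y : List DyckStep),
    List.replicate a U ++ D :: x = List.replicate b U ++ D :: y → a = b ∧ x = y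
  | 0, 0, x, y => by simp
  | 0, b + 1, x, y => by simp [List.replicate_succ]
  | a + 1, 0, x, y => by simp [List.replicate_succ]
  | a + 1, b + 1, x, y => by
    simp only [List.replicate_succ, List.cons_append, List.cons.injEq, true_and]
    intro h
    have := rep_cons_inj a b x y h
    exact ⟨by omega, this.2⟩

lemma blocks_inj : ∀ c c' : List ℕ, blocks c = blocks c' → c = c'
  | [], [], _ => rfl
  | [], c :: cs, h => by simp [blocks] at h
  | c :: cs, [], h => by simp [blocks] at h
  | c :: cs, c' :: cs', h => by
    obtain ⟨h1, h2⟩ := rep_cons_inj c c' (blocks cs) (blocks cs') h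
    rw [h1, blocks_inj cs cs' h2]

lemma take_blocks : ∀ (c : List ℕ) (j : ℕ), j ≤ c.length →
    (blocks c).take ((c.take j).sum + j) = blocks (c.take j)
  | c, 0, _ => by simp [blocks]
  | [], j + 1, h => by simp at h
  | c :: cs, j + 1, h => by
    have hj : j ≤ cs.length := by simpa using h
    have e1 : (c :: cs).take (j + 1) = c :: cs.take j := rfl
    rw [e1, blocks, blocks, List.take_append]
    have h1 : (List.replicate c U).length = c := List.length_replicate ..
    have e2 : (c :: cs.take j).sum = c + (cs.take j).sum := by simp
    rw [e2, h1, List.take_replicate]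
    have h2 : c + (cs.take j).sum + (j + 1) - c = (cs.take j).sum + j + 1 := by omega
    have h4 : min (c + (cs.take j).sum + (j + 1)) c = c := by omega
    rw [h2, h4]
    have e3 : (cs.take j).sum + j + 1 = ((cs.take j).sum + j) + 1 := rfl
    rw [e3, List.take_succ_cons, take_blocks cs j hj]

lemma prefix_blocks : ∀ (c : List ℕ) (k : ℕ),
    (∀ j, j ≤ c.length → j ≤ k + (c.take j).sum) →
    ∀ i, ((blocks c).take i).count D ≤ k + ((blocks c).take i).count U
  | [], k, _, i => by simp [blocks]
  | c :: cs, k, hyp, i => by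
    have h1 : 1 ≤ k + c := by
      have := hyp 1 (by simp)
      simpa using this
    rw [blocks, List.take_append, List.length_replicate, List.take_replicate,
      List.count_append, List.count_append]
    by_cases hic : i ≤ c
    · have hz : i - c = 0 := by omega
      rw [hz]
      simp [List.count_replicate]
    · have e : i - c = (i - c - 1) + 1 := by omega
      have key := prefix_blocks cs (k + c - 1) (fun j hj => by
        have h2 := hyp (j + 1) (by simp; omega)
        have e2 : ((c :: cs).take (j + 1)).sum = c + (cs.take j).sum := by simp
        omega) (i - c - 1)
      have hmin : min i c = c := by omega
      rw [e, hmin, List.take_succ_cons]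
      simp only [List.count_cons, List.count_replicate]
      simp only [show (D == U) = false by decide, show (U == U) = true by decide,
        show (U == D) = false by decide, show (D == D) = true by decide,
        Bool.false_eq_true, if_false, if_true]
      omega

lemma blocks_decomp : ∀ (N : ℕ) (L : List DyckStep), L.length ≤ N →
    ∃ c t, L = blocks c ++ List.replicate t U ∧ c.length = L.count D := by
  intro N
  induction N with
  | zero =>
    intro L hL
    have hnil : L = [] := List.length_eq_zero_iff.mp (by omega)
    exact ⟨[], 0, by simp [hnil, blocks], by simp [hnil, blocks]⟩
  | succ N ih =>
    intro L hL
    by_cases hD : L.count D = 0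
    · refine ⟨[], L.length, ?_, by simp [blocks, hD]⟩
      rw [blocks, List.nil_append]
      refine List.eq_replicate_iff.mpr ⟨rfl, ?_⟩
      intro b hb
      rcases b.dichotomy with rfl | rfl
      · rfl
      · exact absurd (List.count_pos_iff.mpr hb) (by omega)
    · set tw := L.takeWhile (fun s => s == U) with htw
      set dw := L.dropWhile (fun s => s == U) with hdw
      have hsplit : tw ++ dw = L := List.takeWhile_append_dropWhile
      have htwU : ∀ s ∈ tw, s = U := fun s hs => by
        simpa using List.mem_takeWhile_imp hs
      have htwD : tw.count D = 0 := by
        rw [List.count_eq_zero]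
        intro hmem
        exact absurd (htwU _ hmem) (by decide)
      have hdwne : dw ≠ [] := by
        intro hnil
        apply hD
        rw [← hsplit, hnil, List.append_nil]
        exact htwD
      obtain ⟨d, L', hd⟩ : ∃ d L', dw = d :: L' := List.exists_cons_of_ne_nil hdwne
      have hdD : d = D := by
        have hh := List.head_dropWhile_not (fun s => s == U) (l := L) (by rw [← hdw]; exact hdwne)
        have key : ∀ (M : List DyckStep) (hM : M ≠ []), (M.head hM == U) = false →
            M = d :: L' → d = D := by
          intro M hM h1 h2
          subst h2
          simp only [List.head_cons] at h1
          rcases d.dichotomy with rfl | rfl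
          · simp at h1
          · rfl
        exact key _ _ hh hd
      subst hdD
      have hlen' : L'.length ≤ N := by
        have hlen := congrArg List.length hsplit
        rw [hd] at hlen
        simp only [List.length_append, List.length_cons] at hlen
        omega
      obtain ⟨c', t, hL', hc'len⟩ := ih L' hlen'
      have htwrep : tw = List.replicate tw.length U := List.eq_replicate_iff.mpr ⟨rfl, htwU⟩
      refine ⟨tw.length :: c', t, ?_, ?_⟩
      · rw [blocks, ← hsplit, hd, hL', ← htwrep, List.append_assoc]
        rfl
      · rw [← hsplit, hd, List.count_append, List.count_cons, htwD, List.length_cons, hc'len]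
        simp

lemma counts_length (w : List ℕ) (m : ℕ) : (counts w m).length = m := by simp [counts]

lemma take_counts (w : List ℕ) {j m : ℕ} (hj : j ≤ m) : (counts w m).take j = counts w j := by
  rw [counts, counts, ← List.map_take, List.take_range, Nat.min_eq_left hj]

lemma cons_one_filter (w : List ℕ) {i : ℕ} (hi : 1 ≤ i) :
    ((1 :: w).filter (fun x => x ≤ i)).length = 1 + (w.filter (fun x => x ≤ i)).length := by
  rw [List.filter_cons, if_pos (by simpa using hi), List.length_cons]
  omega

lemma card_sorted_pf (m : ℕ) :
    Set.ncard {w : List ℕ | w.length = m ∧ IsParkingFunction w ∧ List.Pairwise (· ≤ ·) w}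
      = catalan m := by
  classical
  set S : Set (List ℕ) := {w | w.length = m ∧ IsParkingFunction w ∧ List.Pairwise (· ≤ ·) w}
    with hS
  have hsum : ∀ w ∈ S, (counts w m).sum = m := by
    rintro w ⟨hlen, hpf, hs⟩
    rw [sum_counts w hpf.1 m, filter_eq_self_of_pf hpf (le_of_eq hlen), hlen]
  have hpsum : ∀ w ∈ S, ∀ j ≤ m, j ≤ ((counts w m).take j).sum := by
    rintro w ⟨hlen, hpf, hs⟩ j hj
    rcases Nat.eq_zero_or_pos j with rfl | hjpos
    · exact Nat.zero_le _
    · rw [take_counts w hj, sum_counts w hpf.1 j]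
      exact hpf.2 j hjpos (by omega)
  have hround : ∀ w ∈ S, fromCounts 1 (counts w m) = w := by
    rintro w ⟨hlen, hpf, hs⟩
    refine List.Perm.eq_of_pairwise' (sorted_fromCounts _ _) hs (List.perm_iff_count.mpr ?_)
    intro k
    match k with
    | 0 =>
      have h1 : (fromCounts 1 (counts w m)).count 0 = 0 :=
        List.count_eq_zero.mpr (fun hmem => by
          have := (mem_fromCounts _ _ _ hmem).1; omega)
      have h2 : w.count 0 = 0 :=
        List.count_eq_zero.mpr (fun hmem => by have := hpf.1 0 hmem; omega)
      rw [h1, h2]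
    | k + 1 =>
      by_cases hk : k < m
      · rw [count_fromCounts _ k (by rwa [counts_length])]
        simp [counts]
      · have h1 : (fromCounts 1 (counts w m)).count (k + 1) = 0 :=
          List.count_eq_zero.mpr (fun hmem => by
            have h := (mem_fromCounts _ _ _ hmem).2
            rw [counts_length] at h
            omega)
        have h2 : w.count (k + 1) = 0 :=
          List.count_eq_zero.mpr (fun hmem => by
            have := pf_le_length hpf _ hmem
            omega)
        rw [h1, h2]
  let Φ : S → {p : DyckWord // p.semilength = m} := fun x =>
    ⟨⟨blocks (counts x.1 m),
      by rw [count_U_blocks, count_D_blocks, hsum x.1 x.2, counts_length],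
      by
        intro i
        have h := prefix_blocks (counts x.1 m) 0 (fun j hj => by
          have := hpsum x.1 x.2 j (by rwa [counts_length] at hj); omega) i
        simpa using h⟩,
      by
        show (blocks (counts x.1 m)).count U = m
        rw [count_U_blocks, hsum x.1 x.2]⟩
  have hinj : Function.Injective Φ := by
    rintro ⟨w, hw⟩ ⟨w', hw'⟩ h
    have hb : blocks (counts w m) = blocks (counts w' m) :=
      congrArg (fun p => p.1.toList) h
    have hc := blocks_inj _ _ hb
    have heq : w = w' := by rw [← hround w hw, hc, hround w' hw']
    exact Subtype.ext heq
  have hsurjf : Function.Surjective Φ := by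
    rintro ⟨p, hp⟩
    have hCD : p.toList.count D = m := by
      rw [← DyckWord.semilength_eq_count_D, hp]
    have hCU : p.toList.count U = m := hp
    obtain ⟨c, t, hLdec, hclen⟩ := blocks_decomp p.toList.length p.toList le_rfl
    have ht : t = 0 := by
      by_contra ht0
      obtain ⟨t', rfl⟩ : ∃ t', t = t' + 1 := ⟨t - 1, by omega⟩
      have h1 : p.toList = (blocks c ++ List.replicate t' U) ++ [U] := by
        rw [hLdec, List.replicate_succ', ← List.append_assoc]
      have hne : p.toList ≠ [] := by rw [h1]; simp
      have h2 : p.toList.getLast hne = D := p.getLast_eq_D hne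
      have h3 : p.toList.getLast? = some U := by rw [h1]; exact List.getLast?_concat
      rw [List.getLast?_eq_getLast hne, h2] at h3
      simp at h3
    subst ht
    rw [List.replicate_zero, List.append_nil] at hLdec
    have hclen' : c.length = m := by rw [hclen, hCD]
    have hcsum : c.sum = m := by rw [← count_U_blocks c, ← hLdec, hCU]
    have hps : ∀ j ≤ m, j ≤ (c.take j).sum := by
      intro j hj
      have h4 := take_blocks c j (by omega)
      have h5 := p.count_D_le_count_U ((c.take j).sum + j)
      rw [hLdec, h4, count_D_blocks, count_U_blocks, List.length_take] at h5
      omega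
    have hwS : fromCounts 1 c ∈ S := by
      refine ⟨by rw [length_fromCounts, hcsum], ⟨?_, ?_⟩, sorted_fromCounts _ _⟩
      · exact fun x hx => (mem_fromCounts _ _ _ hx).1
      · intro i h1 h2
        rw [filter_fromCounts]
        have e : i + 1 - 1 = i := by omega
        rw [e]
        rw [length_fromCounts, hcsum] at h2
        exact hps i h2
    refine ⟨⟨fromCounts 1 c, hwS⟩, ?_⟩
    have hcounts : counts (fromCounts 1 c) m = c := by
      refine List.ext_get (by rw [counts_length, hclen']) ?_
      intro j hj1 hj2
      have hjm : j < m := by rwa [counts_length] at hj1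
      have hcf := count_fromCounts c j (by omega)
      simp only [List.get_eq_getElem] at hcf ⊢
      simp only [counts, List.getElem_map, List.getElem_range]
      exact hcf
    apply Subtype.ext
    apply DyckWord.ext
    show blocks (counts (fromCounts 1 c) m) = p.toList
    rw [hcounts, hLdec]
  calc S.ncard = Nat.card S := (Nat.card_coe_set_eq S).symm
    _ = Nat.card {p : DyckWord // p.semilength = m} :=
        Nat.card_eq_of_bijective Φ ⟨hinj, hsurjf⟩
    _ = Fintype.card {p : DyckWord // p.semilength = m} := Nat.card_eq_fintype_card
    _ = catalan m := DyckWord.card_dyckWord_semilength_eq_catalan m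

end PPFAux

/-- For every `n ≥ 1`, prepending the letter `1` is a bijection from the set of
nondecreasing parking functions of length `n-1` onto the set of nondecreasing prime
parking functions of length `n`; consequently, the number of nondecreasing prime
parking functions of length `n` is the Catalan number `C_{n-1}`. -/
theorem nondecreasing_prime_parkingFunctions (n : ℕ) (hn : 1 ≤ n) :
    Set.BijOn (fun w : List ℕ => 1 :: w)
      {w : List ℕ | w.length = n - 1 ∧ IsParkingFunction w ∧ List.Pairwise (· ≤ ·) w}
      {w : List ℕ | w.length = n ∧ IsPrimeParkingFunction w ∧ List.Pairwise (· ≤ ·) w} ∧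
    Set.ncard {w : List ℕ | w.length = n ∧ IsPrimeParkingFunction w ∧ List.Pairwise (· ≤ ·) w}
      = catalan (n - 1) := by
  open PPFAux in
  have hmaps : ∀ w ∈ {w : List ℕ | w.length = n - 1 ∧ IsParkingFunction w ∧
      List.Pairwise (· ≤ ·) w}, (1 :: w) ∈ {w : List ℕ | w.length = n ∧
      IsPrimeParkingFunction w ∧ List.Pairwise (· ≤ ·) w} := by
    rintro w ⟨hlen, hpf, hs⟩
    have hlen1 : (1 :: w).length = n := by simp [hlen]; omega
    have hone : ∀ x ∈ (1 :: w), 1 ≤ x := by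
      intro x hx
      rcases List.mem_cons.mp hx with rfl | hxw
      · exact le_rfl
      · exact hpf.1 x hxw
    have hpf1 : IsParkingFunction (1 :: w) := by
      refine ⟨hone, ?_⟩
      intro i h1 h2
      rw [PPFAux.cons_one_filter w h1]
      rw [hlen1] at h2
      by_cases hin : i ≤ n - 1
      · have := hpf.2 i h1 (by omega)
        omega
      · have hfw : w.filter (fun x => x ≤ i) = w :=
          List.filter_eq_self.mpr (fun a ha => by
            simp only [decide_eq_true_eq]
            have := PPFAux.pf_le_length hpf a ha
            omega)
        rw [hfw, hlen]
        omega
    have hprime : ∀ b, IsBreakpoint (1 :: w) b → b = 0 ∨ b = (1 :: w).length := by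
      intro b hb
      rcases Nat.eq_zero_or_pos b with rfl | hbpos
      · exact Or.inl rfl
      right
      rw [hlen1]
      by_contra hbn
      have hble : b ≤ (1 :: w).length := by
        rw [← hb]
        exact List.length_filter_le _ _
      rw [hlen1] at hble
      have hb' := hb
      rw [IsBreakpoint, PPFAux.cons_one_filter w hbpos] at hb'
      have := hpf.2 b hbpos (by omega)
      omega
    refine ⟨hlen1, ⟨hpf1, hprime⟩, ?_⟩
    rw [List.pairwise_cons]
    exact ⟨fun b hb => hone b (List.mem_cons_of_mem _ hb), hs⟩
  have hkey : ∀ v ∈ {w : List ℕ | w.length = n ∧ IsPrimeParkingFunction w ∧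
      List.Pairwise (· ≤ ·) w}, ∃ w ∈ {w : List ℕ | w.length = n - 1 ∧ IsParkingFunction w ∧
      List.Pairwise (· ≤ ·) w}, (1 :: w) = v := by
    rintro v ⟨hlen, ⟨hpf, hprime⟩, hs⟩
    obtain ⟨a, w, rfl⟩ : ∃ a w, v = a :: w := by
      cases v with
      | nil => simp at hlen; omega
      | cons a w => exact ⟨a, w, rfl⟩
    have hlw : w.length = n - 1 := by
      simp only [List.length_cons] at hlen
      omega
    have ha1 : a = 1 := by
      have h1 := hpf.2 1 le_rfl (by simp)
      have h2 : ∃ x ∈ (a :: w), x ≤ 1 := by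
        by_contra hcon
        push_neg at hcon
        have hnil : (a :: w).filter (fun x => x ≤ 1) = [] :=
          List.filter_eq_nil_iff.mpr (fun x hx => by
            simp only [decide_eq_true_eq]
            have := hcon x hx
            omega)
        rw [hnil] at h1
        simp at h1
      obtain ⟨x, hx, hxle⟩ := h2
      have hage := hpf.1 a (List.mem_cons_self)
      rcases List.mem_cons.mp hx with rfl | hxw
      · omega
      · have := (List.pairwise_cons.mp hs).1 x hxw
        omega
    subst ha1
    refine ⟨w, ⟨hlw, ⟨fun x hx => hpf.1 x (List.mem_cons_of_mem _ hx), ?_⟩,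
      (List.pairwise_cons.mp hs).2⟩, rfl⟩
    intro i h1 h2
    have h3 := hpf.2 i h1 (by simp; omega)
    rw [PPFAux.cons_one_filter w h1] at h3
    have h4 : ((1 :: w).filter (fun x => x ≤ i)).length ≠ i := by
      intro hbp
      rcases hprime i hbp with h | h
      · omega
      · rw [List.length_cons, hlw] at h
        omega
    rw [PPFAux.cons_one_filter w h1] at h4
    omega
  have hbij : Set.BijOn (fun w : List ℕ => 1 :: w)
      {w : List ℕ | w.length = n - 1 ∧ IsParkingFunction w ∧ List.Pairwise (· ≤ ·) w}
      {w : List ℕ | w.length = n ∧ IsPrimeParkingFunction w ∧ List.Pairwise (· ≤ ·) w} := by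
    refine ⟨hmaps, ?_, ?_⟩
    · intro w _ w' _ h
      simpa using h
    · intro v hv
      obtain ⟨w, hw, hwv⟩ := hkey v hv
      exact ⟨w, hw, hwv⟩
  refine ⟨hbij, ?_⟩
  rw [← hbij.image_eq, Set.ncard_image_of_injOn hbij.injOn]
  exact PPFAux.card_sorted_pf (n - 1)
end

section
/- The set of parking functions is closed under shifted shuffle and shifted concatenation: if u is a parking function of length p and v is a parking function of length q, then every word in the shifted shuffle u⋒v is a parking function of length p+q; in particular the shifted concatenation u•v is a parking function of length p+q. -/
/-- `IsShuffle u v w` means that `w` is a shuffle (interleaving) of `u` and `v`. -/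
inductive IsShuffle : List ℕ → List ℕ → List ℕ → Prop
  | nil : IsShuffle [] [] []
  | left {a : ℕ} {u v w : List ℕ} : IsShuffle u v w → IsShuffle (a :: u) v (a :: w)
  | right {b : ℕ} {u v w : List ℕ} : IsShuffle u v w → IsShuffle u (b :: v) (b :: w)

lemma IsShuffle.perm {u v w : List ℕ} (h : IsShuffle u v w) : w.Perm (u ++ v) := by
  induction h with
  | nil => simp
  | left h ih => exact ih.cons _
  | right h ih => exact (ih.cons _).trans List.perm_middle.symm

lemma isParkingFunction_of_perm {w w' : List ℕ} (h : w.Perm w')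
    (hw : IsParkingFunction w) : IsParkingFunction w' := by
  obtain ⟨h1, h2⟩ := hw
  refine ⟨fun x hx => h1 x (h.mem_iff.mpr hx), fun i hi1 hi2 => ?_⟩
  rw [← h.length_eq] at hi2
  have := h2 i hi1 hi2
  rwa [(h.filter _).length_eq] at this

lemma isParkingFunction_mem_le {u : List ℕ} (hu : IsParkingFunction u) :
    ∀ x ∈ u, x ≤ u.length := by
  rcases u with _ | ⟨a, t⟩
  · simp
  · intro x hx
    set u := a :: t with hudef
    have hlen : 1 ≤ u.length := by simp [hudef]
    have h := hu.2 u.length hlen le_rfl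
    have hsub : (u.filter (fun x => x ≤ u.length)).Sublist u := List.filter_sublist
    have heq : u.filter (fun x => x ≤ u.length) = u :=
      hsub.eq_of_length (le_antisymm hsub.length_le h)
    have : x ∈ u.filter (fun x => x ≤ u.length) := by rw [heq]; exact hx
    simpa using (List.of_mem_filter this)

lemma concat_parking (u v : List ℕ) (hu : IsParkingFunction u) (hv : IsParkingFunction v) :
    IsParkingFunction (u ++ v.map (· + u.length)) := by
  obtain ⟨hu1, hu2⟩ := hu
  obtain ⟨hv1, hv2⟩ := hv
  constructor
  · intro x hx
    rcases List.mem_append.mp hx with h | h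
    · exact hu1 x h
    · obtain ⟨y, hy, rfl⟩ := List.mem_map.mp h
      exact le_trans (hv1 y hy) (Nat.le_add_right _ _)
  · intro i hi1 hi2
    rw [List.filter_append, List.length_append]
    by_cases hle : i ≤ u.length
    · have := hu2 i hi1 hle
      omega
    · push_neg at hle
      have hall : u.filter (fun x => x ≤ i) = u := by
        apply List.filter_eq_self.mpr
        intro x hx
        have := isParkingFunction_mem_le ⟨hu1, hu2⟩ x hx
        simpa using le_trans this (le_of_lt hle)
      set j := i - u.length with hj
      have hij : i = u.length + j := by omega
      have hjq : j ≤ v.length := by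
        simp only [List.length_append, List.length_map] at hi2
        omega
      have hj1 : 1 ≤ j := by omega
      have hvcount := hv2 j hj1 hjq
      have hmapfilter : ((v.map (· + u.length)).filter (fun x => x ≤ i)).length
          = (v.filter (fun x => x ≤ j)).length := by
        rw [List.filter_map, List.length_map]
        congr 1
        apply List.filter_congr
        intro x hx
        simp only [Function.comp]
        rw [decide_eq_decide]
        omega
      rw [hall, hmapfilter]
      omega

/-- The set of parking functions is closed under the shifted shuffle and under
shifted concatenation: if `u` and `v` are parking functions of lengths `p` and `q`,
then every word in the shifted shuffle `u ⋒ v` (every interleaving of `u` with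
`v.map (· + p)`) is a parking function of length `p + q`; in particular the shifted
concatenation `u ++ v.map (· + p)` is a parking function of length `p + q`. -/
theorem parkingFunctions_closed_shiftedShuffle (u v : List ℕ)
    (hu : IsParkingFunction u) (hv : IsParkingFunction v) :
    (∀ w : List ℕ, IsShuffle u (v.map (· + u.length)) w →
        w.length = u.length + v.length ∧ IsParkingFunction w) ∧
    (u ++ v.map (· + u.length)).length = u.length + v.length ∧
    IsParkingFunction (u ++ v.map (· + u.length)) := by
  have hc := concat_parking u v hu hv
  have hlen : (u ++ v.map (· + u.length)).length = u.length + v.length := by simp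
  refine ⟨fun w hw => ?_, hlen, hc⟩
  have hp := hw.perm
  exact ⟨by rw [hp.length_eq, hlen], isParkingFunction_of_perm hp.symm hc⟩
end

section
/- Let a be a parking function of length n and let b be an integer with 0 < b < n. Then there exist parking functions u of length b and v of length n−b such that a belongs to the shifted shuffle u⋒v if and only if b is a breakpoint of a; moreover, in that case u and v are unique: u is the subword of a consisting of the letters ≤ b, and v is obtained from the subword of a consisting of the letters > b by subtracting b from each letter. -/
lemma shuffle_length {u v w : List ℕ} (h : IsShuffle u v w) :
    w.length = u.length + v.length := by
  induction h with
  | nil => simp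
  | left _ ih => simp only [List.length_cons, ih]; omega
  | right _ ih => simp only [List.length_cons, ih]; omega

lemma shuffle_of_filter (p : ℕ → Bool) (a : List ℕ) :
    IsShuffle (a.filter p) (a.filter (fun x => !(p x))) a := by
  induction a with
  | nil => exact IsShuffle.nil
  | cons x t ih =>
    cases hx : p x
    · simpa [List.filter_cons, hx] using IsShuffle.right ih
    · simpa [List.filter_cons, hx] using IsShuffle.left ih

lemma shuffle_eq_filter {p : ℕ → Bool} {u v w : List ℕ}
    (h : IsShuffle u v w) (hu : ∀ x ∈ u, p x = true) (hv : ∀ x ∈ v, p x = false) :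
    u = w.filter p ∧ v = w.filter (fun x => !(p x)) := by
  induction h with
  | nil => simp
  | @left x u v w h ih =>
    obtain ⟨h1, h2⟩ := ih (fun y hy => hu y (List.mem_cons_of_mem _ hy)) hv
    have hx := hu x (List.mem_cons_self)
    exact ⟨by simp [List.filter_cons, hx, ← h1], by simp [List.filter_cons, hx, ← h2]⟩
  | @right x u v w h ih =>
    obtain ⟨h1, h2⟩ := ih hu (fun y hy => hv y (List.mem_cons_of_mem _ hy))
    have hx := hv x (List.mem_cons_self)
    exact ⟨by simp [List.filter_cons, hx, ← h1], by simp [List.filter_cons, hx, ← h2]⟩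

lemma parking_all_le {w : List ℕ} (h : IsParkingFunction w) :
    ∀ x ∈ w, x ≤ w.length := by
  intro x hx
  rcases Nat.eq_zero_or_pos w.length with h0 | h0
  · simp [List.length_eq_zero_iff.mp h0] at hx
  · have hlen := h.2 w.length h0 le_rfl
    have hsub := List.filter_sublist (p := fun x => decide (x ≤ w.length)) (l := w)
    have heq : w.filter (fun x => x ≤ w.length) = w :=
      hsub.eq_of_length (le_antisymm hsub.length_le hlen)
    simpa using (List.filter_eq_self.mp heq) x hx

lemma countP_split (l : List ℕ) (p q : ℕ → Bool) :
    l.countP q = l.countP (fun x => q x && p x) + l.countP (fun x => q x && !p x) := by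
  induction l with
  | nil => simp
  | cons x t ih =>
    simp only [List.countP_cons]
    cases p x <;> cases q x <;> simp <;> omega

/-- Let `a` be a parking function of length `n` and `0 < b < n`. Then there exist
parking functions `u` of length `b` and `v` of length `n - b` with `a` in the shifted
shuffle `u ⋒ v` if and only if `b` is a breakpoint of `a`; moreover in that case the
pair `(u, v)` is unique: `u` is the subword of `a` made of the letters `≤ b`, and `v`
is obtained from the subword of letters `> b` by subtracting `b` from each letter. -/
theorem shiftedShuffle_splitting_iff_breakpoint (a : List ℕ) (n b : ℕ)
    (ha : a.length = n) (hpf : IsParkingFunction a) (hb0 : 0 < b) (hbn : b < n) :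
    ((∃ u v : List ℕ, u.length = b ∧ v.length = n - b ∧
        IsParkingFunction u ∧ IsParkingFunction v ∧
        IsShuffle u (v.map (· + b)) a) ↔ IsBreakpoint a b) ∧
    (∀ u v : List ℕ, u.length = b → v.length = n - b →
        IsParkingFunction u → IsParkingFunction v →
        IsShuffle u (v.map (· + b)) a →
        u = a.filter (fun x => x ≤ b) ∧
        v = (a.filter (fun x => b < x)).map (· - b)) := by
  -- the uniqueness / identification part
  have key : ∀ u v : List ℕ, u.length = b →
      IsParkingFunction u → IsParkingFunction v →
      IsShuffle u (v.map (· + b)) a →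
      u = a.filter (fun x => x ≤ b) ∧
      v = (a.filter (fun x => b < x)).map (· - b) := by
    intro u v hul hu hv hsh
    have hu_all : ∀ x ∈ u, (decide (x ≤ b)) = true := by
      intro x hx
      simpa using (parking_all_le hu x hx).trans (le_of_eq hul)
    have hv_all : ∀ x ∈ v.map (· + b), (decide (x ≤ b)) = false := by
      intro x hx
      obtain ⟨y, hy, rfl⟩ := List.mem_map.mp hx
      have := hv.1 y hy
      simp; omega
    obtain ⟨h1, h2⟩ := shuffle_eq_filter hsh hu_all hv_all
    have hfc : a.filter (fun x => b < x) = a.filter (fun x => !decide (x ≤ b)) :=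
      List.filter_congr (fun x _ => by
        rw [← decide_not]
        exact decide_eq_decide.mpr (by omega))
    refine ⟨h1, ?_⟩
    rw [hfc, ← h2, List.map_map]
    have : ∀ y ∈ v, ((· - b) ∘ (· + b)) y = id y := by intro y _; simp
    rw [List.map_congr_left this, List.map_id]
  refine ⟨⟨?_, ?_⟩, fun u v hul hvl hu hv hsh => key u v hul hu hv hsh⟩
  · rintro ⟨u, v, hul, hvl, hu, hv, hsh⟩
    obtain ⟨h1, -⟩ := key u v hul hu hv hsh
    unfold IsBreakpoint
    rw [← h1]; exact hul
  · intro hbp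
    unfold IsBreakpoint at hbp
    have hbp' : a.countP (fun x => decide (x ≤ b)) = b := by
      rw [List.countP_eq_length_filter]; exact hbp
    have hsh0 : IsShuffle (a.filter (fun x => x ≤ b))
        (a.filter (fun x => !decide (x ≤ b))) a :=
      shuffle_of_filter (fun x => decide (x ≤ b)) a
    have hlen : a.length = (a.filter (fun x => x ≤ b)).length
        + (a.filter (fun x => !decide (x ≤ b))).length := shuffle_length hsh0
    have hwmem : ∀ y ∈ a.filter (fun x => !decide (x ≤ b)), b < y := by
      intro y hy
      have := (List.mem_filter.mp hy).2
      simp only [Bool.not_eq_true', decide_eq_false_iff_not] at this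
      omega
    have hwb : ((a.filter (fun x => !decide (x ≤ b))).map (· - b)).map (· + b)
        = a.filter (fun x => !decide (x ≤ b)) := by
      rw [List.map_map]
      have : ∀ y ∈ a.filter (fun x => !decide (x ≤ b)),
          ((· + b) ∘ (· - b)) y = id y := by
        intro y hy; have := hwmem y hy; simp; omega
      rw [List.map_congr_left this, List.map_id]
    refine ⟨a.filter (fun x => x ≤ b),
      (a.filter (fun x => !decide (x ≤ b))).map (· - b), hbp, ?_, ⟨?_, ?_⟩, ⟨?_, ?_⟩,
      by rw [hwb]; exact hsh0⟩
    · rw [List.length_map]; omega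
    · intro x hx
      exact hpf.1 x (List.mem_filter.mp hx).1
    · -- u is a parking function
      intro i hi1 hi2
      rw [hbp] at hi2
      have hfe : (a.filter (fun x => x ≤ b)).filter (fun x => x ≤ i)
          = a.filter (fun x => x ≤ i) := by
        rw [List.filter_filter]
        refine List.filter_congr (fun x _ => ?_)
        by_cases hxi : x ≤ i
        · simp [hxi, hxi.trans hi2]
        · simp [hxi]
      rw [hfe]
      exact hpf.2 i hi1 (by omega)
    · intro x hx
      obtain ⟨y, hy, rfl⟩ := List.mem_map.mp hx
      have := hwmem y hy
      omega
    · -- v is a parking function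
      intro i hi1 hi2
      rw [List.length_map] at hi2
      have e1 : (((a.filter (fun x => !decide (x ≤ b))).map (· - b)).filter
            (fun x => x ≤ i)).length
          = a.countP (fun y => decide (y ≤ b + i) && !decide (y ≤ b)) := by
        rw [← List.countP_eq_length_filter, List.countP_map, List.countP_filter]
        refine List.countP_congr (fun y _ => ?_)
        by_cases hyb : y ≤ b
        · simp [Function.comp, hyb]
        · simp only [Function.comp, hyb, decide_false, Bool.not_false, Bool.and_true,
            decide_eq_true_eq]
          omega
      have e2 := countP_split a (fun x => decide (x ≤ b)) (fun y => decide (y ≤ b + i))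
      have e3 : a.countP (fun y => decide (y ≤ b + i) && decide (y ≤ b)) = b := by
        rw [← hbp']
        refine List.countP_congr (fun y _ => ?_)
        constructor
        · intro h; simp at h ⊢; omega
        · intro h; simp at h ⊢; omega
      have e4 : b + i ≤ a.countP (fun y => decide (y ≤ b + i)) := by
        rw [List.countP_eq_length_filter]
        exact hpf.2 (b + i) (by omega) (by omega)
      omega
end

section
/- (i) If a parking function a is written as a shifted concatenation a = u•v of two nonempty words, then u and v are themselves parking functions. (ii) Every nonempty parking function a admits a unique factorization a = a_1 • a_2 • ⋯ • a_k as a shifted concatenation of nonempty connected parking functions. -/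
/-- A word (over the positive integers) is connected if it cannot be written as the
shifted concatenation `u ++ v.map (· + u.length)` of two nonempty words over the
positive integers. -/
def Connected (w : List ℕ) : Prop :=
  ¬ ∃ u v : List ℕ, u ≠ [] ∧ v ≠ [] ∧ (∀ x ∈ u, 1 ≤ x) ∧ (∀ x ∈ v, 1 ≤ x) ∧
      w = u ++ v.map (· + u.length)

/-- Shifted concatenation of a list of words. -/
def sconcat : List (List ℕ) → List ℕ
  | [] => []
  | u :: L => u ++ (sconcat L).map (· + u.length)

/-!
Shifting `v` by `n = |u|` moves all its letters above `n`. Hence for `i ≤ |u|` the letters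
`≤ i` of `u • v` are those of `u`, while for `i ≤ |v|` the letters `≤ |u| + i` are at most
`|u|` letters of `u` plus the letters `≤ i` of `v`; both parking conditions follow.

For the factorization, a word that is not connected splits as `u • v` with shorter `u, v`,
so strong induction on the length produces a factorization into connected words, whose
factors are parking functions by (i). For uniqueness, compare the first factors `w`, `w'`
of two factorizations: if `w` were a proper prefix of `w'`, the rest `r` of `w'` would
consist of letters above `|w|` (it begins the shifted tail), so `w' = w • (r - |w|)`
would not be connected.
-/

lemma length_filter_map_add_le_add (v : List ℕ) (n i : ℕ) :
    ((v.map (· + n)).filter (· ≤ n + i)).length = (v.filter (· ≤ i)).length := by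
  rw [List.filter_map, List.length_map]
  congr 1
  exact List.filter_congr fun x _ => by simp only [Function.comp_apply, decide_eq_decide]; omega

lemma filter_map_add_le_eq_nil {v : List ℕ} (hv : ∀ x ∈ v, 1 ≤ x) {n i : ℕ} (hi : i ≤ n) :
    (v.map (· + n)).filter (· ≤ i) = [] := by
  simp only [List.filter_eq_nil_iff, List.mem_map, decide_eq_true_eq]
  rintro _ ⟨x, hx, rfl⟩
  have := hv x hx
  omega

lemma IsParkingFunction.left_of_shiftAppend {u v : List ℕ} (hv : ∀ x ∈ v, 1 ≤ x)
    (h : IsParkingFunction (u ++ v.map (· + u.length))) : IsParkingFunction u := by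
  refine ⟨fun x hx => h.1 x (List.mem_append_left _ hx), fun i hi₁ hi₂ => ?_⟩
  have := h.2 i hi₁ (by simp only [List.length_append, List.length_map]; omega)
  rwa [List.filter_append, filter_map_add_le_eq_nil hv hi₂, List.append_nil] at this

lemma IsParkingFunction.right_of_shiftAppend {u v : List ℕ} (hv : ∀ x ∈ v, 1 ≤ x)
    (h : IsParkingFunction (u ++ v.map (· + u.length))) : IsParkingFunction v := by
  refine ⟨hv, fun i hi₁ hi₂ => ?_⟩
  have := h.2 (u.length + i) (by omega) (by simp only [List.length_append, List.length_map]; omega)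
  rw [List.filter_append, List.length_append, length_filter_map_add_le_add] at this
  have := List.length_filter_le (· ≤ u.length + i) u
  omega

lemma sconcat_append (L₁ L₂ : List (List ℕ)) :
    sconcat (L₁ ++ L₂) = sconcat L₁ ++ (sconcat L₂).map (· + (sconcat L₁).length) := by
  induction L₁ with
  | nil => simp [sconcat]
  | cons u t ih =>
    simp only [List.cons_append, sconcat, ih, List.map_append, List.map_map, List.append_assoc,
      List.length_append, List.length_map]
    congr 2
    exact List.map_congr_left fun x _ => by simp only [Function.comp_apply]; omega

lemma one_le_of_mem_sconcat {L : List (List ℕ)} (hL : ∀ w ∈ L, ∀ x ∈ w, 1 ≤ x) :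
    ∀ x ∈ sconcat L, 1 ≤ x := by
  induction L with
  | nil => simp [sconcat]
  | cons u t ih =>
    simp only [sconcat, List.mem_append, List.mem_map]
    rintro x (hx | ⟨y, hy, rfl⟩)
    · exact hL u List.mem_cons_self x hx
    · have := ih (fun w hw => hL w (List.mem_cons_of_mem u hw)) y hy
      omega

lemma IsParkingFunction.of_mem_sconcat {L : List (List ℕ)} (hL : ∀ w ∈ L, ∀ x ∈ w, 1 ≤ x)
    (h : IsParkingFunction (sconcat L)) : ∀ w ∈ L, IsParkingFunction w := by
  induction L with
  | nil => simp
  | cons u t ih =>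
    have htpos : ∀ w ∈ t, ∀ x ∈ w, 1 ≤ x := fun w hw => hL w (List.mem_cons_of_mem u hw)
    rintro w (_ | ⟨_, hw⟩)
    · exact h.left_of_shiftAppend (one_le_of_mem_sconcat htpos)
    · exact ih htpos (h.right_of_shiftAppend (one_le_of_mem_sconcat htpos)) w hw

theorem exists_connected_factorization (a : List ℕ) (ha : ∀ x ∈ a, 1 ≤ x) :
    ∃ L : List (List ℕ),
      (∀ w ∈ L, w ≠ [] ∧ Connected w ∧ ∀ x ∈ w, 1 ≤ x) ∧ sconcat L = a := by
  induction hn : a.length using Nat.strong_induction_on generalizing a with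
  | _ n ih =>
  rcases eq_or_ne a [] with rfl | hne
  · exact ⟨[], by simp, rfl⟩
  by_cases hconn : Connected a
  · exact ⟨[a], by simpa using ⟨hne, hconn, ha⟩, by simp [sconcat]⟩
  obtain ⟨u, v, hu, hv, hupos, hvpos, rfl⟩ := not_not.mp hconn
  have hlen : (u ++ v.map (· + u.length)).length = u.length + v.length := by simp
  have := List.length_pos_iff.mpr hu
  have := List.length_pos_iff.mpr hv
  obtain ⟨Lu, hLu, rfl⟩ := ih u.length (by omega) u hupos rfl
  obtain ⟨Lv, hLv, rfl⟩ := ih v.length (by omega) v hvpos rfl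
  refine ⟨Lu ++ Lv, fun w hw => ?_, sconcat_append Lu Lv⟩
  exact (List.mem_append.mp hw).elim (hLu w) (hLv w)

lemma not_connected_append {w r : List ℕ} (hw : w ≠ []) (hr : r ≠ [])
    (hwpos : ∀ x ∈ w, 1 ≤ x) (hr_gt : ∀ x ∈ r, w.length < x) : ¬ Connected (w ++ r) := by
  refine not_not.mpr ⟨w, r.map (· - w.length), hw, by simpa using hr, hwpos, ?_, ?_⟩
  · simp only [List.mem_map]
    rintro _ ⟨x, hx, rfl⟩
    have := hr_gt x hx
    omega
  · rw [List.map_map]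
    conv_lhs => rw [← List.map_id r]
    congr 1
    exact List.map_congr_left fun x hx => by
      have := hr_gt x hx
      simp only [id, Function.comp_apply]
      omega

lemma eq_of_append_map_add_eq_append {w w' s s' : List ℕ} (hw : w ≠ [])
    (hwpos : ∀ x ∈ w, 1 ≤ x) (hspos : ∀ x ∈ s, 1 ≤ x) (hconn : Connected w')
    (hle : w.length ≤ w'.length) (h : w ++ s.map (· + w.length) = w' ++ s') : w = w' := by
  obtain ⟨r, rfl⟩ := List.prefix_of_prefix_length_le ⟨_, h⟩ ⟨_, rfl⟩ hle
  rcases eq_or_ne r [] with rfl | hr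
  · exact (List.append_nil w).symm
  have hrs : s.map (· + w.length) = r ++ s' := by
    rw [List.append_assoc] at h
    exact List.append_cancel_left h
  refine absurd hconn (not_connected_append hw hr hwpos fun x hx => ?_)
  obtain ⟨y, hy, rfl⟩ := List.mem_map.mp (hrs ▸ List.mem_append_left s' hx)
  have := hspos y hy
  omega

theorem eq_of_sconcat_eq_of_connected {L L' : List (List ℕ)}
    (hL : ∀ w ∈ L, w ≠ [] ∧ Connected w ∧ ∀ x ∈ w, 1 ≤ x)
    (hL' : ∀ w ∈ L', w ≠ [] ∧ Connected w ∧ ∀ x ∈ w, 1 ≤ x)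
    (h : sconcat L = sconcat L') : L = L' := by
  induction L generalizing L' with
  | nil =>
    cases L' with
    | nil => rfl
    | cons w' t' => simp [sconcat, (hL' w' List.mem_cons_self).1] at h
  | cons w t ih =>
    cases L' with
    | nil => simp [sconcat, (hL w List.mem_cons_self).1] at h
    | cons w' t' =>
      have htpos := one_le_of_mem_sconcat fun s hs => (hL s (List.mem_cons_of_mem w hs)).2.2
      have ht'pos := one_le_of_mem_sconcat fun s hs => (hL' s (List.mem_cons_of_mem w' hs)).2.2
      obtain ⟨hw, hwconn, hwpos⟩ := hL w List.mem_cons_self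
      obtain ⟨hw', hw'conn, hw'pos⟩ := hL' w' List.mem_cons_self
      simp only [sconcat] at h
      obtain rfl : w = w' := by
        rcases le_total w.length w'.length with hle | hle
        · exact eq_of_append_map_add_eq_append hw hwpos htpos hw'conn hle h
        · exact (eq_of_append_map_add_eq_append hw' hw'pos ht'pos hwconn hle h.symm).symm
      have htt' : sconcat t = sconcat t' :=
        (List.map_injective_iff.mpr (add_left_injective w.length)) (List.append_cancel_left h)
      rw [ih (fun s hs => hL s (List.mem_cons_of_mem w hs))
        (fun s hs => hL' s (List.mem_cons_of_mem w hs)) htt']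

/-- (i) If a parking function is written as a shifted concatenation
`u ++ v.map (· + u.length)` of two nonempty words over the positive integers,
then `u` and `v` are themselves parking functions.
(ii) Every nonempty parking function admits a unique factorization as a shifted
concatenation of nonempty connected parking functions. -/
theorem parkingFunction_factorization :
    (∀ u v : List ℕ, u ≠ [] → v ≠ [] → (∀ x ∈ u, 1 ≤ x) → (∀ x ∈ v, 1 ≤ x) →
      IsParkingFunction (u ++ v.map (· + u.length)) →
      IsParkingFunction u ∧ IsParkingFunction v) ∧
    (∀ a : List ℕ, a ≠ [] → IsParkingFunction a →
      ∃! L : List (List ℕ),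
        (∀ w ∈ L, w ≠ [] ∧ Connected w ∧ IsParkingFunction w) ∧ sconcat L = a) := by
  refine ⟨fun u v _ _ _ hv h => ⟨h.left_of_shiftAppend hv, h.right_of_shiftAppend hv⟩, ?_⟩
  intro a _ ha
  obtain ⟨L, hL, rfl⟩ := exists_connected_factorization a ha.1
  have hLpf := ha.of_mem_sconcat fun w hw => (hL w hw).2.2
  refine ⟨L, ⟨fun w hw => ⟨(hL w hw).1, (hL w hw).2.1, hLpf w hw⟩, rfl⟩, ?_⟩
  rintro L' ⟨hL', hL'a⟩
  exact eq_of_sconcat_eq_of_connected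
    (fun w hw => ⟨(hL' w hw).1, (hL' w hw).2.1, (hL' w hw).2.2.1⟩) hL hL'a
end

section
/- In the ring of formal power series ℚ[[t]], the exponential generating functions of parking functions and of prime parking functions satisfy (Σ_{n≥0} |PF_n| t^n/n!) · (1 − Σ_{n≥1} |PPF_n| t^n/n!) = 1; explicitly, Σ_{n≥0} (n+1)^{n-1} t^n/n! = (1 − t − Σ_{n≥2} (n−1)^{n-1} t^n/n!)^{-1}. -/
namespace ParkingAux
open Finset


/-- count of letters `≤ j` -/
def ct {n : ℕ} (a : Fin n → ℕ) (j : ℕ) : ℕ := #(univ.filter fun i => a i ≤ j)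

def IsPF {n : ℕ} (a : Fin n → ℕ) : Prop :=
  (∀ i, 1 ≤ a i) ∧ ∀ j, 1 ≤ j → j ≤ n → j ≤ ct a j

def IsPPF {n : ℕ} (a : Fin n → ℕ) : Prop :=
  IsPF a ∧ ∀ b, ct a b = b → b = 0 ∨ b = n

lemma ct_ofFn {n : ℕ} (a : Fin n → ℕ) (j : ℕ) :
    ((List.ofFn a).filter (fun x => x ≤ j)).length = ct a j := by
  induction n with
  | zero => simp [ct]
  | succ m ih =>
    rw [List.ofFn_succ, List.filter_cons]
    have h2 : ct a j = (if a 0 ≤ j then 1 else 0) + ct (fun i : Fin m => a i.succ) j := by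
      unfold ct
      rw [card_filter, Fin.sum_univ_succ, ← card_filter]
    rw [h2, ← ih]
    by_cases h : a 0 ≤ j <;> simp [h] <;> omega

lemma isPF_ofFn_iff {n : ℕ} (a : Fin n → ℕ) :
    IsParkingFunction (List.ofFn a) ↔ IsPF a := by
  unfold IsParkingFunction IsPF
  simp [List.forall_mem_ofFn_iff, ct_ofFn]

lemma isPPF_ofFn_iff {n : ℕ} (a : Fin n → ℕ) :
    IsPrimeParkingFunction (List.ofFn a) ↔ IsPPF a := by
  unfold IsPrimeParkingFunction IsPPF IsBreakpoint
  simp [isPF_ofFn_iff, ct_ofFn]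

def listEquiv (n : ℕ) (Q : List ℕ → Prop) :
    {w : List ℕ // w.length = n ∧ Q w} ≃ {a : Fin n → ℕ // Q (List.ofFn a)} where
  toFun w := ⟨fun i => w.1.get (Fin.cast w.2.1.symm i), by
    obtain ⟨w, h1, h2⟩ := w
    subst h1
    simpa [List.ofFn_get] using h2⟩
  invFun a := ⟨List.ofFn a.1, by simp [a.2]⟩
  left_inv := by
    rintro ⟨w, h1, h2⟩
    subst h1
    simp [List.ofFn_get]
  right_inv := by
    rintro ⟨a, ha⟩
    ext i
    simp [List.get_ofFn]

lemma ncard_pf (n : ℕ) :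
    {w : List ℕ | w.length = n ∧ IsParkingFunction w}.ncard
      = Nat.card {a : Fin n → ℕ // IsPF a} := by
  rw [← Nat.card_coe_set_eq]
  exact Nat.card_congr (((listEquiv n _).trans
    (Equiv.subtypeEquivRight fun a => isPF_ofFn_iff a)))

lemma ncard_ppf (n : ℕ) :
    {w : List ℕ | w.length = n ∧ IsPrimeParkingFunction w}.ncard
      = Nat.card {a : Fin n → ℕ // IsPPF a} := by
  rw [← Nat.card_coe_set_eq]
  exact Nat.card_congr (((listEquiv n _).trans
    (Equiv.subtypeEquivRight fun a => isPPF_ofFn_iff a)))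

lemma ct_le {n : ℕ} (a : Fin n → ℕ) (j : ℕ) : ct a j ≤ n := by
  classical
  refine (card_filter_le _ _).trans ?_
  simp

lemma IsPF.le {n : ℕ} {a : Fin n → ℕ} (ha : IsPF a) (i : Fin n) : a i ≤ n := by
  classical
  by_contra hlt
  push_neg at hlt
  have h := ha.2 n i.pos le_rfl
  have hi : i ∉ univ.filter (fun i => a i ≤ n) := by simp; omega
  have hsub : univ.filter (fun i => a i ≤ n) ⊆ univ.erase i := by
    intro x hx
    rcases eq_or_ne x i with rfl | hne
    · exact absurd hx hi
    · exact mem_erase.mpr ⟨hne, mem_univ x⟩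
  have hle := card_le_card hsub
  have hcard : #(univ.erase i) = n - 1 := by
    rw [card_erase_of_mem (mem_univ i)]
    simp
  rw [hcard] at hle
  unfold ct at h
  have := i.pos
  omega

lemma finite_subtype {n : ℕ} (P : (Fin n → ℕ) → Prop) (h : ∀ a, P a → ∀ i, a i ≤ n) :
    Finite {a : Fin n → ℕ // P a} := by
  have hinj : Function.Injective
      (fun a : {a : Fin n → ℕ // P a} =>
        (fun i => (⟨min (a.1 i) n, Nat.lt_succ_of_le (min_le_right _ _)⟩ : Fin (n+1)))) := by
    rintro ⟨a, ha⟩ ⟨b, hb⟩ hab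
    ext i
    have := congrFun hab i
    simp only [Fin.mk.injEq] at this
    have h1 := h a ha i
    have h2 := h b hb i
    rwa [min_eq_left h1, min_eq_left h2] at this
  exact Finite.of_injective _ hinj

instance {n : ℕ} : Finite {a : Fin n → ℕ // IsPF a} :=
  finite_subtype _ (fun _ ha => ha.le)

instance {n : ℕ} : Finite {a : Fin n → ℕ // IsPPF a} :=
  finite_subtype _ (fun _ ha => ha.1.le)


lemma exists_unique_low (m : ℕ) (hm : 1 ≤ m) (U : ℕ → ℤ)
    (hU : ∀ x, U (x + m) = U x - 1) :
    ∃! r, r < m ∧ ∀ j, 1 ≤ j → j < m → U r ≤ U (r + j) := by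
  classical
  have hex : ∃ x, x < m ∧ ∀ y, y < m → U x ≤ U y := by
    obtain ⟨x, hx, hmin⟩ := Finset.exists_min_image (range m) U ⟨0, mem_range.mpr hm⟩
    exact ⟨x, mem_range.mp hx, fun y hy => hmin y (mem_range.mpr hy)⟩
  have hrm : Nat.find hex < m := (Nat.find_spec hex).1
  have hrmin : ∀ y, y < m → U (Nat.find hex) ≤ U y := (Nat.find_spec hex).2
  set r := Nat.find hex with hrdef
  refine ⟨r, ⟨hrm, ?_⟩, ?_⟩
  · intro j hj1 hjm
    rcases lt_or_ge (r + j) m with h | h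
    · exact hrmin _ h
    · obtain ⟨x, hxe⟩ : ∃ x, r + j = x + m := ⟨r + j - m, by omega⟩
      have hx : x < r := by omega
      have hxm : x < m := by omega
      have hne := Nat.find_min hex hx
      have hyex : ∃ y, y < m ∧ U y < U x := by
        by_contra hc
        push_neg at hc
        exact hne ⟨hxm, fun y hy => hc y hy⟩
      obtain ⟨y, hy, hUy⟩ := hyex
      have h1 : U (r + j) = U x - 1 := by rw [hxe, hU]
      have h2 : U r ≤ U y := hrmin y hy
      omega
  · rintro r' ⟨hr'm, hcond⟩
    have hmin' : ∀ y, y < m → U r' ≤ U y := by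
      intro y hy
      rcases lt_trichotomy y r' with h | h | h
      · have hc := hcond (y + m - r') (by omega) (by omega)
        have he : r' + (y + m - r') = y + m := by omega
        rw [he, hU] at hc
        omega
      · subst h; exact le_rfl
      · have hc := hcond (y - r') (by omega) (by omega)
        have he : r' + (y - r') = y := by omega
        rwa [he] at hc
    have h1 : r ≤ r' := Nat.find_min' hex ⟨hr'm, hmin'⟩
    by_contra hne
    have h2 : r < r' := by omega
    have hc := hcond (r + m - r') (by omega) (by omega)
    have he : r' + (r + m - r') = r + m := by omega
    rw [he, hU] at hc
    have h3 : U r ≤ U r' := hrmin r' hr'm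
    omega

lemma exists_unique_high (m : ℕ) (hm : 1 ≤ m) (U : ℕ → ℤ)
    (hU : ∀ x, U (x + m) = U x + 1) :
    ∃! r, r < m ∧ ∀ j, 1 ≤ j → j ≤ m → U r + 1 ≤ U (r + j) := by
  classical
  have hex : ∃ x, x < m ∧ ∀ y, y < m → U x ≤ U y := by
    obtain ⟨x, hx, hmin⟩ := Finset.exists_min_image (range m) U ⟨0, mem_range.mpr hm⟩
    exact ⟨x, mem_range.mp hx, fun y hy => hmin y (mem_range.mpr hy)⟩
  obtain ⟨x₀, hx₀⟩ := hex
  set P : ℕ → Prop := fun x => x < m ∧ ∀ y, y < m → U x ≤ U y with hP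
  have hPr : P (Nat.findGreatest P m) := Nat.findGreatest_spec (le_of_lt hx₀.1) hx₀
  have hrm : Nat.findGreatest P m < m := hPr.1
  have hrmin : ∀ y, y < m → U (Nat.findGreatest P m) ≤ U y := hPr.2
  set r := Nat.findGreatest P m with hrdef
  refine ⟨r, ⟨hrm, ?_⟩, ?_⟩
  · intro j hj1 hjm
    rcases lt_or_ge (r + j) m with h | h
    · have hgt : ¬ P (r + j) :=
        Nat.findGreatest_is_greatest (n := m) (by omega) (by omega)
      have hyex : ∃ y, y < m ∧ U y < U (r + j) := by
        by_contra hc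
        push_neg at hc
        exact hgt ⟨h, fun y hy => hc y hy⟩
      obtain ⟨y, hy, hUy⟩ := hyex
      have h2 := hrmin y hy
      omega
    · obtain ⟨x, hxe⟩ : ∃ x, r + j = x + m := ⟨r + j - m, by omega⟩
      have h1 : U (r + j) = U x + 1 := by rw [hxe, hU]
      have h2 : U r ≤ U x := hrmin _ (by omega)
      omega
  · rintro r' ⟨hr'm, hcond⟩
    have hmin' : ∀ y, y < m → U r' ≤ U y := by
      intro y hy
      rcases lt_trichotomy y r' with h | h | h
      · have hc := hcond (y + m - r') (by omega) (by omega)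
        have he : r' + (y + m - r') = y + m := by omega
        rw [he, hU] at hc
        omega
      · subst h; exact le_rfl
      · have hc := hcond (y - r') (by omega) (by omega)
        have he : r' + (y - r') = y := by omega
        rw [he] at hc
        omega
    have h1 : r' ≤ r := Nat.le_findGreatest (by omega) ⟨hr'm, hmin'⟩
    by_contra hne
    have h2 : r' < r := by omega
    have hc := hcond (r - r') (by omega) (by omega)
    have he : r' + (r - r') = r := by omega
    rw [he] at hc
    have h3 : U r ≤ U r' := hrmin r' hr'm
    omega

section Cyclic
variable (m : ℕ) [NeZero m] {n : ℕ} (a : Fin n → ZMod m)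

def hfib (t : ℕ) : ℕ := #(univ.filter fun i => (a i).val = t)

def Hs (x : ℕ) : ℕ := ∑ t ∈ range x, hfib m a (t % m)

lemma sum_hfib : ∑ t ∈ range m, hfib m a t = n := by
  classical
  have h := Finset.card_eq_sum_card_fiberwise
    (f := fun i => (a i).val) (s := univ) (t := range m)
    (fun i _ => mem_range.mpr (ZMod.val_lt _))
  simpa [hfib] using h.symm

lemma Hs_succ (x : ℕ) : Hs m a (x + 1) = Hs m a x + hfib m a (x % m) :=
  Finset.sum_range_succ _ _

lemma Hs_add (x : ℕ) : Hs m a (x + m) = Hs m a x + n := by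
  induction x with
  | zero =>
    rw [Nat.zero_add]
    have h0 : Hs m a 0 = 0 := by simp [Hs]
    rw [h0, Nat.zero_add]
    unfold Hs
    rw [Finset.sum_congr rfl (fun t ht => by rw [Nat.mod_eq_of_lt (mem_range.mp ht)])]
    exact sum_hfib m a
  | succ k ih =>
    have h1 : k + 1 + m = (k + m) + 1 := by omega
    have h2 : (k + m) % m = k % m := by simp [Nat.add_mod_right]
    rw [h1, Hs_succ, ih, Hs_succ, h2]
    omega

omit [NeZero m] in
lemma val_shift_iff (v c t : ℕ) (hv : v < m) (ht : t < m) (hc : c < m) :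
    (v + c) % m = t ↔ v = ((m - c) + t) % m := by
  constructor
  · intro h
    have h1 : ((m - c) + t) % m = ((m - c) + (v + c) % m) % m := by rw [h]
    rw [Nat.add_mod_mod] at h1
    have h2 : m - c + (v + c) = v + m := by omega
    rw [h2, Nat.add_mod_right, Nat.mod_eq_of_lt hv] at h1
    omega
  · intro h
    rw [h, Nat.mod_add_mod]
    have h2 : m - c + t + c = t + m := by omega
    rw [h2, Nat.add_mod_right, Nat.mod_eq_of_lt ht]

lemma Hs_chunk (r j : ℕ) :
    Hs m a (r + j) = Hs m a r + ∑ t ∈ range j, hfib m a ((r + t) % m) := by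
  induction j with
  | zero => simp
  | succ k ih =>
    rw [show r + (k + 1) = (r + k) + 1 by omega, Hs_succ, ih, Finset.sum_range_succ]
    omega

lemma shiftct_eq (c j : ℕ) (hc : c < m) (hj : j ≤ m) :
    Hs m a (m - c) + #(univ.filter fun i => ((a i).val + c) % m < j)
      = Hs m a ((m - c) + j) := by
  classical
  rw [Hs_chunk]
  congr 1
  have hcnt := Finset.card_eq_sum_card_fiberwise
    (f := fun i => ((a i).val + c) % m)
    (s := univ.filter fun i => ((a i).val + c) % m < j) (t := range j)
    (fun i hi => mem_range.mpr (mem_filter.mp hi).2)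
  rw [hcnt]
  refine Finset.sum_congr rfl (fun t ht => ?_)
  have htj : t < j := mem_range.mp ht
  have htm : t < m := lt_of_lt_of_le htj hj
  rw [Finset.filter_filter]
  unfold hfib
  congr 1
  apply Finset.filter_congr
  intro i _
  constructor
  · rintro ⟨-, h2⟩
    exact (val_shift_iff m _ c t (ZMod.val_lt _) htm hc).mp h2
  · intro h
    have := (val_shift_iff m _ c t (ZMod.val_lt _) htm hc).mpr h
    exact ⟨by omega, this⟩

end Cyclic

section Shift
variable {m n : ℕ} [NeZero m]

lemma val_eq_imp_eq {c c' : ZMod m} (h : c.val = c'.val) : c = c' := by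
  have h1 := ZMod.natCast_rightInverse (n := m) c
  have h2 := ZMod.natCast_rightInverse (n := m) c'
  rw [← h1, ← h2, h]

lemma filter_shift (a : Fin n → ZMod m) (c : ZMod m) (j : ℕ) :
    (univ.filter fun i => (a i + c).val < j)
      = (univ.filter fun i => ((a i).val + c.val) % m < j) := by
  apply filter_congr
  intro i _
  rw [ZMod.val_add]

lemma exists_unique_shift_low (hm : n + 1 = m) (a : Fin n → ZMod m) :
    ∃! c : ZMod m, ∀ j, 1 ≤ j → j < m →
      j ≤ #(univ.filter fun i => (a i + c).val < j) := by
  classical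
  set U : ℕ → ℤ := fun x => (Hs m a x : ℤ) - x with hUdef
  have hUper : ∀ x, U (x + m) = U x - 1 := by
    intro x
    simp only [hUdef]
    rw [Hs_add]
    push_cast
    omega
  have hm1 : 1 ≤ m := by omega
  have key : ∀ (c : ZMod m) (j : ℕ), j ≤ m →
      (j ≤ #(univ.filter fun i => (a i + c).val < j) ↔
        U (m - c.val) ≤ U (m - c.val + j)) := by
    intro c j hj
    have hs := shiftct_eq m a c.val j (ZMod.val_lt c) hj
    rw [filter_shift]
    simp only [hUdef]
    constructor <;> intro h <;> omega
  have hcond : ∀ c : ZMod m,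
      (∀ j, 1 ≤ j → j < m → j ≤ #(univ.filter fun i => (a i + c).val < j)) ↔
        (∀ j, 1 ≤ j → j < m → U (m - c.val) ≤ U (m - c.val + j)) := by
    intro c
    refine forall_congr' fun j => ?_
    refine imp_congr_right fun hj1 => imp_congr_right fun hjm => ?_
    exact key c j (le_of_lt hjm)
  -- wrap-around: condition at m equals condition at 0
  have hUm : U m = U 0 - 1 := by simpa using hUper 0
  have hUmj : ∀ j, U (m + j) = U j - 1 := fun j => by
    rw [Nat.add_comm]; exact hUper j
  have hwrap : (∀ j, 1 ≤ j → j < m → U m ≤ U (m + j)) ↔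
      (∀ j, 1 ≤ j → j < m → U 0 ≤ U (0 + j)) := by
    refine forall_congr' fun j => imp_congr_right fun h1 => imp_congr_right fun h2 => ?_
    rw [hUm, hUmj j, Nat.zero_add]
    omega
  obtain ⟨r₀, ⟨hr₀m, hr₀⟩, hr₀uniq⟩ := exists_unique_low m hm1 U hUper
  -- the candidate
  refine ⟨((m - r₀ : ℕ) : ZMod m), ?_, ?_⟩
  · refine (hcond _).mpr ?_
    have hval : (((m - r₀ : ℕ) : ZMod m)).val = (m - r₀) % m := ZMod.val_natCast _ _
    rcases Nat.eq_zero_or_pos r₀ with h0 | hpos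
    · subst h0
      have : (((m - 0 : ℕ) : ZMod m)).val = 0 := by
        rw [hval]; simp
      rw [this]
      simp only [Nat.sub_zero]
      rw [hwrap]
      intro j h1 h2
      simpa using hr₀ j h1 h2
    · have hlt : m - r₀ < m := by omega
      rw [hval, Nat.mod_eq_of_lt hlt, show m - (m - r₀) = r₀ by omega]
      exact hr₀
  · intro c hc
    replace hc := (hcond c).mp hc
    have hcv : c.val < m := ZMod.val_lt c
    rcases Nat.eq_zero_or_pos c.val with h0 | hpos
    · -- r' = m, condition transfers to 0
      rw [h0, Nat.sub_zero, hwrap] at hc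
      have : (0 : ℕ) = r₀ := hr₀uniq 0 ⟨by omega, by simpa using hc⟩
      apply val_eq_imp_eq
      rw [h0, ZMod.val_natCast, ← this]
      simp
    · have hr' : m - c.val < m := by omega
      have : m - c.val = r₀ := hr₀uniq _ ⟨hr', hc⟩
      apply val_eq_imp_eq
      rw [ZMod.val_natCast, ← this, show m - (m - c.val) = c.val by omega,
        Nat.mod_eq_of_lt hcv]

lemma exists_unique_shift_high (hm : n = m + 1) (a : Fin n → ZMod m) :
    ∃! c : ZMod m, ∀ j, 1 ≤ j → j ≤ m →
      j + 1 ≤ #(univ.filter fun i => (a i + c).val < j) := by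
  classical
  set U : ℕ → ℤ := fun x => (Hs m a x : ℤ) - x with hUdef
  have hUper : ∀ x, U (x + m) = U x + 1 := by
    intro x
    simp only [hUdef]
    rw [Hs_add]
    push_cast
    omega
  have hm1 : 1 ≤ m := NeZero.one_le
  have key : ∀ (c : ZMod m) (j : ℕ), j ≤ m →
      (j + 1 ≤ #(univ.filter fun i => (a i + c).val < j) ↔
        U (m - c.val) + 1 ≤ U (m - c.val + j)) := by
    intro c j hj
    have hs := shiftct_eq m a c.val j (ZMod.val_lt c) hj
    rw [filter_shift]
    simp only [hUdef]
    constructor <;> intro h <;> omega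
  have hcond : ∀ c : ZMod m,
      (∀ j, 1 ≤ j → j ≤ m → j + 1 ≤ #(univ.filter fun i => (a i + c).val < j)) ↔
        (∀ j, 1 ≤ j → j ≤ m → U (m - c.val) + 1 ≤ U (m - c.val + j)) := by
    intro c
    refine forall_congr' fun j => ?_
    refine imp_congr_right fun hj1 => imp_congr_right fun hjm => ?_
    exact key c j hjm
  have hUm : U m = U 0 + 1 := by simpa using hUper 0
  have hUmj : ∀ j, U (m + j) = U j + 1 := fun j => by
    rw [Nat.add_comm]; exact hUper j
  have hwrap : (∀ j, 1 ≤ j → j ≤ m → U m + 1 ≤ U (m + j)) ↔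
      (∀ j, 1 ≤ j → j ≤ m → U 0 + 1 ≤ U (0 + j)) := by
    refine forall_congr' fun j => imp_congr_right fun h1 => imp_congr_right fun h2 => ?_
    rw [hUm, hUmj j, Nat.zero_add]
    omega
  obtain ⟨r₀, ⟨hr₀m, hr₀⟩, hr₀uniq⟩ := exists_unique_high m hm1 U hUper
  refine ⟨((m - r₀ : ℕ) : ZMod m), ?_, ?_⟩
  · refine (hcond _).mpr ?_
    have hval : (((m - r₀ : ℕ) : ZMod m)).val = (m - r₀) % m := ZMod.val_natCast _ _
    rcases Nat.eq_zero_or_pos r₀ with h0 | hpos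
    · subst h0
      have : (((m - 0 : ℕ) : ZMod m)).val = 0 := by
        rw [hval]; simp
      rw [this]
      simp only [Nat.sub_zero]
      rw [hwrap]
      intro j h1 h2
      simpa using hr₀ j h1 h2
    · have hlt : m - r₀ < m := by omega
      rw [hval, Nat.mod_eq_of_lt hlt, show m - (m - r₀) = r₀ by omega]
      exact hr₀
  · intro c hc
    replace hc := (hcond c).mp hc
    have hcv : c.val < m := ZMod.val_lt c
    rcases Nat.eq_zero_or_pos c.val with h0 | hpos
    · rw [h0, Nat.sub_zero, hwrap] at hc
      have : (0 : ℕ) = r₀ := hr₀uniq 0 ⟨by omega, by simpa using hc⟩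
      apply val_eq_imp_eq
      rw [h0, ZMod.val_natCast, ← this]
      simp
    · have hr' : m - c.val < m := by omega
      have : m - c.val = r₀ := hr₀uniq _ ⟨hr', hc⟩
      apply val_eq_imp_eq
      rw [ZMod.val_natCast, ← this, show m - (m - c.val) = c.val by omega,
        Nat.mod_eq_of_lt hcv]

lemma card_eq_of_unique_shift (Q : (Fin n → ZMod m) → Prop)
    (hQ : ∀ a : Fin n → ZMod m, ∃! c : ZMod m, Q (fun i => a i + c)) :
    Nat.card {a : Fin n → ZMod m // Q a} * m = m ^ n := by
  classical
  have hbij : Function.Bijective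
      (fun p : {a : Fin n → ZMod m // Q a} × ZMod m => (fun i => p.1.1 i + p.2)) := by
    constructor
    · rintro ⟨⟨a, ha⟩, c⟩ ⟨⟨a', ha'⟩, c'⟩ h
      simp only at h
      have h2 : (fun i => a i + (0 : ZMod m)) = a := by funext i; simp
      have h3 : (fun i => a i + (c - c')) = a' := by
        funext i
        have hh := congrFun h i
        linear_combination hh
      have hu : (0 : ZMod m) = c - c' :=
        (hQ a).unique (by rw [h2]; exact ha) (by rw [h3]; exact ha')
      have hc : c = c' := by
        have h4 : c - c' = 0 := hu.symm
        have := sub_eq_zero.mp h4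
        exact this
      subst hc
      have ha2 : a = a' := by
        funext i
        have hh := congrFun h i
        exact add_right_cancel hh
      subst ha2
      rfl
    · intro b
      obtain ⟨c, hc, -⟩ := hQ b
      refine ⟨⟨⟨fun i => b i + c, hc⟩, -c⟩, ?_⟩
      funext i
      simp
  have hcard := Nat.card_congr (Equiv.ofBijective _ hbij)
  rw [Nat.card_prod] at hcard
  rw [Nat.card_eq_fintype_card (α := ZMod m), Nat.card_eq_fintype_card (α := (Fin n → ZMod m))] at hcard
  rw [ZMod.card, Fintype.card_fun, ZMod.card, Fintype.card_fin] at hcard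
  exact hcard

end Shift

section CardPF

lemma card_PF_pos (n : ℕ) (hn : 1 ≤ n) :
    Nat.card {a : Fin n → ℕ // IsPF a} * (n+1) = (n+1)^n := by
  classical
  haveI : NeZero (n+1) := ⟨n.succ_ne_zero⟩
  set Q : (Fin n → ZMod (n+1)) → Prop := fun a => ∀ j, 1 ≤ j → j < n+1 →
      j ≤ #(univ.filter fun i => (a i).val < j) with hQ
  have e : {a : Fin n → ℕ // IsPF a} ≃ {a : Fin n → ZMod (n+1) // Q a} :=
    { toFun := fun f => ⟨fun i => ((f.1 i - 1 : ℕ) : ZMod (n+1)), by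
        have hval : ∀ i, (((f.1 i - 1 : ℕ) : ZMod (n+1))).val = f.1 i - 1 := by
          intro i
          rw [ZMod.val_natCast, Nat.mod_eq_of_lt (by have := f.2.le i; omega)]
        intro j hj1 hjm
        have hfe : (univ.filter fun i => (((f.1 i - 1 : ℕ) : ZMod (n+1))).val < j)
            = univ.filter fun i => f.1 i ≤ j := by
          apply filter_congr
          intro i _
          rw [hval i]
          have := f.2.1 i
          omega
        rw [hfe]
        exact f.2.2 j hj1 (by omega)⟩
      invFun := fun a => ⟨fun i => (a.1 i).val + 1, by
        refine ⟨fun i => Nat.le_add_left 1 _, ?_⟩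
        intro j hj1 hjn
        have hfe : (univ.filter fun i : Fin n => (a.1 i).val + 1 ≤ j)
            = univ.filter fun i => (a.1 i).val < j := by
          apply filter_congr
          intro i _
          omega
        unfold ct
        rw [hfe]
        exact a.2 j hj1 (by omega)⟩
      left_inv := by
        rintro ⟨f, hf⟩
        ext i
        simp only
        rw [ZMod.val_natCast, Nat.mod_eq_of_lt (by have := hf.le i; omega)]
        have := hf.1 i
        omega
      right_inv := by
        rintro ⟨a, ha⟩
        ext i
        simp only [Nat.add_sub_cancel]
        exact ZMod.natCast_rightInverse (a i) }
  rw [Nat.card_congr e]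
  exact card_eq_of_unique_shift Q (fun a => exists_unique_shift_low rfl a)

lemma card_PF (n : ℕ) : Nat.card {a : Fin n → ℕ // IsPF a} = (n+1)^(n-1) := by
  rcases Nat.eq_zero_or_pos n with rfl | hn
  · haveI : Unique {a : Fin 0 → ℕ // IsPF a} :=
      { default := ⟨fun i => i.elim0, ⟨fun i => i.elim0, fun j hj hj0 => by omega⟩⟩
        uniq := by
          rintro ⟨a, ha⟩
          ext i
          exact i.elim0 }
    simpa using Nat.card_unique
  · have h := card_PF_pos n hn
    have h2 : (n+1)^n = (n+1)^(n-1) * (n+1) := by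
      rw [← pow_succ, Nat.sub_add_cancel hn]
    rw [h2] at h
    exact Nat.eq_of_mul_eq_mul_right (by omega) h

lemma isPPF_iff (n : ℕ) (hn : 2 ≤ n) (f : Fin n → ℕ) :
    IsPPF f ↔ ((∀ i, 1 ≤ f i ∧ f i ≤ n - 1) ∧
      ∀ j, 1 ≤ j → j ≤ n - 1 → j + 1 ≤ ct f j) := by
  classical
  constructor
  · rintro ⟨hpf, hbp⟩
    have hstep : ∀ j, 1 ≤ j → j ≤ n - 1 → j + 1 ≤ ct f j := by
      intro j h1 h2
      have h3 := hpf.2 j h1 (by omega)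
      rcases eq_or_lt_of_le h3 with he | hlt
      · rcases hbp j he.symm with h | h <;> omega
      · omega
    have hfu : (univ.filter fun i => f i ≤ n - 1) = univ := by
      apply Finset.eq_univ_of_card
      have h5 := hstep (n-1) (by omega) le_rfl
      have h6 := ct_le f (n-1)
      unfold ct at h5 h6
      simp only [Fintype.card_fin]
      omega
    refine ⟨fun i => ⟨hpf.1 i, ?_⟩, hstep⟩
    have : i ∈ univ.filter fun i => f i ≤ n - 1 := by rw [hfu]; exact mem_univ i
    exact (mem_filter.mp this).2
  · rintro ⟨hlet, hstep⟩
    have hub : ∀ b, n - 1 ≤ b → ct f b = n := by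
      intro b hb
      unfold ct
      rw [filter_true_of_mem (fun i _ => le_trans (hlet i).2 hb)]
      simp
    constructor
    · refine ⟨fun i => (hlet i).1, ?_⟩
      intro j h1 h2
      rcases le_or_gt j (n-1) with h | h
      · have := hstep j h1 h
        omega
      · have hj : j = n := by omega
        rw [hj, hub n (by omega)]
    · intro b hb
      rcases Nat.eq_zero_or_pos b with rfl | hb1
      · exact Or.inl rfl
      rcases le_or_gt b (n-1) with h | h
      · have := hstep b hb1 h
        omega
      · right
        have := hub b (by omega)
        omega

lemma card_PPF_pos (n : ℕ) (hn : 2 ≤ n) :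
    Nat.card {a : Fin n → ℕ // IsPPF a} * (n-1) = (n-1)^n := by
  classical
  haveI : NeZero (n-1) := ⟨by omega⟩
  set m := n - 1 with hm
  set Q : (Fin n → ZMod m) → Prop := fun a => ∀ j, 1 ≤ j → j ≤ m →
      j + 1 ≤ #(univ.filter fun i => (a i).val < j) with hQ
  have e : {a : Fin n → ℕ // IsPPF a} ≃ {a : Fin n → ZMod m // Q a} :=
    { toFun := fun f => ⟨fun i => ((f.1 i - 1 : ℕ) : ZMod m), by
        have hin := (isPPF_iff n hn f.1).mp f.2
        have hval : ∀ i, (((f.1 i - 1 : ℕ) : ZMod m)).val = f.1 i - 1 := by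
          intro i
          rw [ZMod.val_natCast, Nat.mod_eq_of_lt (by have := (hin.1 i); omega)]
        intro j hj1 hjm
        have hfe : (univ.filter fun i => (((f.1 i - 1 : ℕ) : ZMod m)).val < j)
            = univ.filter fun i => f.1 i ≤ j := by
          apply filter_congr
          intro i _
          rw [hval i]
          have := (hin.1 i).1
          omega
        rw [hfe]
        exact hin.2 j hj1 hjm⟩
      invFun := fun a => ⟨fun i => (a.1 i).val + 1, by
        rw [isPPF_iff n hn]
        refine ⟨fun i => ⟨by omega, by have := ZMod.val_lt (a.1 i); omega⟩, ?_⟩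
        intro j hj1 hjn
        have hfe : (univ.filter fun i : Fin n => (a.1 i).val + 1 ≤ j)
            = univ.filter fun i => (a.1 i).val < j := by
          apply filter_congr
          intro i _
          omega
        unfold ct
        rw [hfe]
        exact a.2 j hj1 hjn⟩
      left_inv := by
        rintro ⟨f, hf⟩
        have hin := (isPPF_iff n hn f).mp hf
        ext i
        simp only
        rw [ZMod.val_natCast, Nat.mod_eq_of_lt (by have := hin.1 i; omega)]
        have := (hin.1 i).1
        omega
      right_inv := by
        rintro ⟨a, ha⟩
        ext i
        simp only [Nat.add_sub_cancel]
        exact ZMod.natCast_rightInverse (a i) }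
  rw [Nat.card_congr e]
  exact card_eq_of_unique_shift Q (fun a => exists_unique_shift_high (by omega) a)

lemma card_PPF (n : ℕ) (hn : 1 ≤ n) :
    Nat.card {a : Fin n → ℕ // IsPPF a} = (n-1)^(n-1) := by
  classical
  rcases eq_or_lt_of_le hn with h1 | h2
  · -- n = 1
    have h1' : n = 1 := h1.symm
    subst h1'
    haveI : Unique {a : Fin 1 → ℕ // IsPPF a} :=
      { default := ⟨fun _ => 1, by
          constructor
          · constructor
            · intro i; exact le_rfl
            · intro j hj1 hj2
              have hj : j = 1 := by omega
              subst hj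
              unfold ct
              rw [filter_true_of_mem (fun i _ => le_rfl)]
              simp
          · intro b hb
            unfold ct at hb
            rcases Nat.eq_zero_or_pos b with rfl | hb1
            · exact Or.inl rfl
            · right
              have hb1' : 1 ≤ b := hb1
              change #(univ.filter fun _ : Fin 1 => 1 ≤ b) = b at hb
              rw [filter_true_of_mem (fun i _ => hb1')] at hb
              simpa using hb.symm⟩
        uniq := by
          rintro ⟨a, ha⟩
          ext i
          show a i = 1
          have ha1 := ha.1.1 i
          have ha2 := ha.1.2 1 le_rfl le_rfl
          unfold ct at ha2
          have hpos : (univ.filter fun i : Fin 1 => a i ≤ 1).Nonempty :=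
            card_pos.mp (by omega)
          obtain ⟨i₀, hi₀⟩ := hpos
          have hle : a i₀ ≤ 1 := (mem_filter.mp hi₀).2
          have hio : i₀ = i := Subsingleton.elim _ _
          rw [hio] at hle
          omega }
    simpa using Nat.card_unique
  · have h := card_PPF_pos n h2
    have h2' : (n-1)^n = (n-1)^(n-1) * (n-1) := by
      rw [← pow_succ, Nat.sub_add_cancel (by omega)]
    rw [h2'] at h
    exact Nat.eq_of_mul_eq_mul_right (by omega) h

end CardPF


section Decomp
variable {n : ℕ}

lemma ct_full {a : Fin n → ℕ} (ha : IsPF a) (hn : 1 ≤ n) : ct a n = n := by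
  have h1 := ha.2 n hn le_rfl
  have h2 := ct_le a n
  omega

lemma exists_bp {a : Fin n → ℕ} (ha : IsPF a) (hn : 1 ≤ n) :
    ∃ b, 1 ≤ b ∧ ct a b = b := ⟨n, hn, ct_full ha hn⟩

/-- `b` is the minimal positive breakpoint -/
def MinB (a : Fin n → ℕ) (b : ℕ) : Prop :=
  1 ≤ b ∧ ct a b = b ∧ ∀ j, 1 ≤ j → j < b → ct a j ≠ j

lemma find_eq_iff_minB {a : Fin n → ℕ} (ha : IsPF a) (hn : 1 ≤ n) (b : ℕ) :
    Nat.find (exists_bp ha hn) = b ↔ MinB a b := by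
  classical
  constructor
  · rintro rfl
    obtain ⟨h1, h2⟩ := Nat.find_spec (exists_bp ha hn)
    exact ⟨h1, h2, fun j hj1 hj2 he => (Nat.find_min (exists_bp ha hn) hj2) ⟨hj1, he⟩⟩
  · rintro ⟨hb1, hb2, hmin⟩
    refine le_antisymm (Nat.find_min' _ ⟨hb1, hb2⟩) ?_
    by_contra hc
    push_neg at hc
    obtain ⟨h1, h2⟩ := Nat.find_spec (exists_bp ha hn)
    exact hmin _ h1 hc h2

lemma fiber_card (b : ℕ) (hb1 : 1 ≤ b) (hbn : b ≤ n) (S : Finset (Fin n)) (hS : #S = b) :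
    Nat.card {a : Fin n → ℕ // IsPF a ∧ MinB a b ∧ univ.filter (fun i => a i ≤ b) = S}
      = Nat.card {u : Fin b → ℕ // IsPPF u} * Nat.card {v : Fin (n - b) → ℕ // IsPF v} := by
  classical
  rw [← Nat.card_prod]
  apply Nat.card_congr
  have hSc : #(Sᶜ) = n - b := by rw [card_compl, Fintype.card_fin, hS]
  let eS : {x // x ∈ S} ≃ Fin b := S.equivFin.trans (finCongr hS)
  let eC : {x // x ∈ Sᶜ} ≃ Fin (n - b) := (Sᶜ).equivFin.trans (finCongr hSc)
  -- counting transfer lemmas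
  have hct1 : ∀ (a : Fin n → ℕ), (∀ i, i ∈ S ↔ a i ≤ b) → ∀ j, j ≤ b →
      ct (fun p => a (eS.symm p)) j = ct a j := by
    intro a hSa j hj
    unfold ct
    rw [← Fintype.card_subtype, ← Fintype.card_subtype]
    refine Fintype.card_congr ?_
    refine (Equiv.subtypeEquiv eS.symm fun p => Iff.rfl).trans
      (((Equiv.subtypeSubtypeEquivSubtypeInter (· ∈ S) (fun i => a i ≤ j))).trans
        (Equiv.subtypeEquivRight fun i => ?_))
    constructor
    · rintro ⟨-, h2⟩; exact h2
    · intro h; exact ⟨(hSa i).mpr (le_trans h hj), h⟩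
  have hct2 : ∀ (a : Fin n → ℕ), (∀ i, i ∈ S ↔ a i ≤ b) → ∀ j,
      b + ct (fun q => a (eC.symm q) - b) j = ct a (b + j) := by
    intro a hSa j
    unfold ct
    have hsplit : (univ.filter fun i => a i ≤ b + j)
        = S.filter (fun i => a i ≤ b + j) ∪ (Sᶜ).filter (fun i => a i ≤ b + j) := by
      rw [← filter_union, union_compl]
    have hfS : S.filter (fun i => a i ≤ b + j) = S :=
      filter_true_of_mem fun i hi => le_trans ((hSa i).mp hi) (Nat.le_add_right b j)
    have hdisj : Disjoint (S.filter (fun i => a i ≤ b + j)) ((Sᶜ).filter (fun i => a i ≤ b + j)) :=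
      disjoint_filter_filter disjoint_compl_right
    rw [hsplit, card_union_of_disjoint hdisj, hfS, hS]
    congr 1
    have hmem : (Sᶜ).filter (fun i => a i ≤ b + j)
        = univ.filter (fun i => i ∈ Sᶜ ∧ a i ≤ b + j) := by
      ext i
      simp [mem_filter]
    rw [hmem, ← Fintype.card_subtype, ← Fintype.card_subtype]
    refine Fintype.card_congr ?_
    have e1 : {x : Fin (n-b) // a (eC.symm x) - b ≤ j} ≃ {y : {x // x ∈ Sᶜ} // a ↑y - b ≤ j} :=
      Equiv.subtypeEquiv eC.symm fun x => Iff.rfl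
    have e2 : {y : {x // x ∈ Sᶜ} // a ↑y - b ≤ j} ≃ {y : {x // x ∈ Sᶜ} // a ↑y ≤ b + j} := by
      refine Equiv.subtypeEquivRight fun y => ?_
      have hy : ¬ ((y : Fin n) ∈ S) := mem_compl.mp y.2
      have hby : b < a ↑y := by
        by_contra hc
        exact hy ((hSa ↑y).mpr (by omega))
      omega
    have e3 : {y : {x // x ∈ Sᶜ} // a ↑y ≤ b + j} ≃ {x : Fin n // x ∈ Sᶜ ∧ a x ≤ b + j} :=
      Equiv.subtypeSubtypeEquivSubtypeInter (· ∈ Sᶜ) (fun i => a i ≤ b + j)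
    exact e1.trans (e2.trans e3)
  -- the equivalence
  refine
    { toFun := fun a => (⟨fun p => a.1 (eS.symm p), ?_⟩, ⟨fun q => a.1 (eC.symm q) - b, ?_⟩)
      invFun := fun uv => ⟨fun i =>
        if h : i ∈ S then uv.1.1 (eS ⟨i, h⟩) else uv.2.1 (eC ⟨i, mem_compl.mpr h⟩) + b, ?_⟩
      left_inv := ?_
      right_inv := ?_ }
  · -- u is a prime parking function
    obtain ⟨a, hpf, hmb, hfS⟩ := a
    have hSa : ∀ i, i ∈ S ↔ a i ≤ b := by
      intro i
      rw [← hfS]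
      simp
    show IsPPF (fun p => a (eS.symm p))
    constructor
    · refine ⟨fun p => hpf.1 _, ?_⟩
      intro j hj1 hjb
      rw [hct1 a hSa j hjb]
      exact hpf.2 j hj1 (le_trans hjb hbn)
    · intro j hj
      rcases Nat.eq_zero_or_pos j with rfl | hj1
      · exact Or.inl rfl
      right
      have hjb : j ≤ b := by
        have := ct_le (fun p => a (eS.symm p)) j
        omega
      rcases eq_or_lt_of_le hjb with he | hlt
      · exact he
      · exfalso
        rw [hct1 a hSa j hjb] at hj
        exact hmb.2.2 j hj1 hlt hj
  · -- v is a parking function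
    obtain ⟨a, hpf, hmb, hfS⟩ := a
    have hSa : ∀ i, i ∈ S ↔ a i ≤ b := by
      intro i
      rw [← hfS]
      simp
    show IsPF (fun q => a (eC.symm q) - b)
    constructor
    · intro q
      show 1 ≤ a (eC.symm q) - b
      have hq : ¬ ((eC.symm q : Fin n) ∈ S) := mem_compl.mp (eC.symm q).2
      have hgt : b < a (eC.symm q) := by
        by_contra hc
        exact hq ((hSa _).mpr (by omega))
      omega
    · intro j hj1 hjn
      have h2 := hct2 a hSa j
      have h3 := hpf.2 (b + j) (by omega) (by omega)
      omega
  · -- glued function is PF with MinB b and filter S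
    obtain ⟨⟨u, hu⟩, ⟨v, hv⟩⟩ := uv
    simp only
    set w : Fin n → ℕ := fun i =>
      if h : i ∈ S then u (eS ⟨i, h⟩) else v (eC ⟨i, mem_compl.mpr h⟩) + b with hw
    have hwpos : ∀ i (h : i ∈ S), w i = u (eS ⟨i, h⟩) := fun i h => dif_pos h
    have hwneg : ∀ i (h : i ∉ S), w i = v (eC ⟨i, mem_compl.mpr h⟩) + b :=
      fun i h => dif_neg h
    have hSw : ∀ i, i ∈ S ↔ w i ≤ b := by
      intro i
      constructor
      · intro h
        rw [hwpos i h]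
        exact hu.1.le _
      · intro h
        by_contra hc
        rw [hwneg i hc] at h
        have := hv.1 (eC ⟨i, mem_compl.mpr hc⟩)
        omega
    have hfW : univ.filter (fun i => w i ≤ b) = S := by
      ext i
      simp [← hSw i]
    have su : (fun p => w (eS.symm p)) = u := by
      funext p
      rw [hwpos _ (eS.symm p).2]
      congr 1
      rw [Subtype.coe_eta, Equiv.apply_symm_apply]
    have sv : (fun q => w (eC.symm q) - b) = v := by
      funext q
      have hq : (eC.symm q : Fin n) ∉ S := mem_compl.mp (eC.symm q).2
      rw [hwneg _ hq, Nat.add_sub_cancel]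
      congr 1
      rw [Subtype.coe_eta, Equiv.apply_symm_apply]
    have hwpf : IsPF w := by
      constructor
      · intro i
        by_cases h : i ∈ S
        · rw [hwpos i h]; exact hu.1.1 _
        · rw [hwneg i h]; omega
      · intro j hj1 hjn
        rcases le_or_gt j b with hjb | hjb
        · have hh := hct1 w hSw j hjb
          rw [su] at hh
          rw [← hh]
          exact hu.1.2 j hj1 hjb
        · have h2 := hct2 w hSw (j - b)
          rw [sv] at h2
          have h3 : b + (j - b) = j := by omega
          rw [h3] at h2
          have h4 := hv.2 (j - b) (by omega) (by omega)
          omega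
    refine ⟨hwpf, ⟨hb1, ?_, ?_⟩, hfW⟩
    · have hh := hct1 w hSw b le_rfl
      rw [su] at hh
      rw [← hh]
      exact ct_full hu.1 hb1
    · intro j hj1 hjb he
      have hh := hct1 w hSw j (le_of_lt hjb)
      rw [su] at hh
      rw [← hh] at he
      rcases hu.2 j he with h | h <;> omega
  · -- left inverse
    rintro ⟨a, ha⟩
    obtain ⟨hpf, hmb, hfS⟩ := ha
    have hSa : ∀ i, i ∈ S ↔ a i ≤ b := by
      intro i
      rw [← hfS]
      simp
    apply Subtype.ext
    funext i
    simp only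
    by_cases h : i ∈ S
    · rw [dif_pos h]
      show a ↑(eS.symm (eS ⟨i, h⟩)) = a i
      rw [Equiv.symm_apply_apply]
    · rw [dif_neg h]
      show a ↑(eC.symm (eC ⟨i, mem_compl.mpr h⟩)) - b + b = a i
      rw [Equiv.symm_apply_apply]
      show a i - b + b = a i
      have hbi : b < a i := by
        by_contra hc
        exact h ((hSa i).mpr (by omega))
      omega
  · -- right inverse
    rintro ⟨⟨u, hu⟩, ⟨v, hv⟩⟩
    simp only
    set w : Fin n → ℕ := fun i =>
      if h : i ∈ S then u (eS ⟨i, h⟩) else v (eC ⟨i, mem_compl.mpr h⟩) + b with hw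
    have hwpos : ∀ i (h : i ∈ S), w i = u (eS ⟨i, h⟩) := fun i h => dif_pos h
    have hwneg : ∀ i (h : i ∉ S), w i = v (eC ⟨i, mem_compl.mpr h⟩) + b :=
      fun i h => dif_neg h
    have su : (fun p => w (eS.symm p)) = u := by
      funext p
      rw [hwpos _ (eS.symm p).2]
      congr 1
      rw [Subtype.coe_eta, Equiv.apply_symm_apply]
    have sv : (fun q => w (eC.symm q) - b) = v := by
      funext q
      have hq : (eC.symm q : Fin n) ∉ S := mem_compl.mp (eC.symm q).2
      rw [hwneg _ hq, Nat.add_sub_cancel]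
      congr 1
      rw [Subtype.coe_eta, Equiv.apply_symm_apply]
    refine Prod.ext ?_ ?_
    · exact Subtype.ext su
    · exact Subtype.ext sv

lemma card_minB (hn : 1 ≤ n) :
    Nat.card {a : Fin n → ℕ // IsPF a} =
      ∑ b ∈ Icc 1 n, Nat.card {a : Fin n → ℕ // IsPF a ∧ MinB a b} := by
  classical
  set f : {a : Fin n → ℕ // IsPF a} → {b // b ∈ Icc 1 n} := fun a =>
    ⟨Nat.find (exists_bp a.2 hn), by
      rw [mem_Icc]
      exact ⟨(Nat.find_spec (exists_bp a.2 hn)).1,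
        Nat.find_min' _ ⟨hn, ct_full a.2 hn⟩⟩⟩ with hf
  rw [Nat.card_congr (Equiv.sigmaFiberEquiv f).symm]
  haveI : ∀ y : {b // b ∈ Icc 1 n}, Fintype {x // f x = y} := fun y => Fintype.ofFinite _
  rw [Nat.card_eq_fintype_card, Fintype.card_sigma]
  have hterm : ∀ y : {b // b ∈ Icc 1 n},
      Fintype.card {x // f x = y} = Nat.card {a : Fin n → ℕ // IsPF a ∧ MinB a y.1} := by
    intro y
    rw [← Nat.card_eq_fintype_card]
    apply Nat.card_congr
    refine
      { toFun := fun x => ⟨x.1.1, x.1.2,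
          (find_eq_iff_minB x.1.2 hn _).mp (congrArg Subtype.val x.2)⟩
        invFun := fun a => ⟨⟨a.1, a.2.1⟩,
          Subtype.ext ((find_eq_iff_minB a.2.1 hn _).mpr a.2.2)⟩
        left_inv := fun x => Subtype.ext (Subtype.ext rfl)
        right_inv := fun a => Subtype.ext rfl }
  rw [Finset.sum_congr rfl (fun y _ => hterm y)]
  exact Finset.sum_coe_sort (Icc 1 n) (fun b => Nat.card {a : Fin n → ℕ // IsPF a ∧ MinB a b})

lemma card_minB_eq (b : ℕ) (hb1 : 1 ≤ b) (hbn : b ≤ n) :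
    Nat.card {a : Fin n → ℕ // IsPF a ∧ MinB a b}
      = n.choose b * (Nat.card {u : Fin b → ℕ // IsPPF u}
          * Nat.card {v : Fin (n - b) → ℕ // IsPF v}) := by
  classical
  haveI : Finite {a : Fin n → ℕ // IsPF a ∧ MinB a b} :=
    finite_subtype _ (fun a ha => ha.1.le)
  set f : {a : Fin n → ℕ // IsPF a ∧ MinB a b} → {S // S ∈ powersetCard b (univ : Finset (Fin n))} :=
    fun a => ⟨univ.filter (fun i => a.1 i ≤ b), by
      rw [mem_powersetCard_univ]
      exact a.2.2.2.1⟩ with hf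
  rw [Nat.card_congr (Equiv.sigmaFiberEquiv f).symm]
  haveI : ∀ y : {S // S ∈ powersetCard b (univ : Finset (Fin n))}, Fintype {x // f x = y} :=
    fun y => Fintype.ofFinite _
  rw [Nat.card_eq_fintype_card, Fintype.card_sigma]
  have hterm : ∀ y : {S // S ∈ powersetCard b (univ : Finset (Fin n))},
      Fintype.card {x // f x = y}
        = Nat.card {u : Fin b → ℕ // IsPPF u} * Nat.card {v : Fin (n - b) → ℕ // IsPF v} := by
    intro y
    rw [← Nat.card_eq_fintype_card]
    rw [← fiber_card b hb1 hbn y.1 (mem_powersetCard_univ.mp y.2)]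
    apply Nat.card_congr
    refine
      { toFun := fun x => ⟨x.1.1, x.1.2.1, x.1.2.2, congrArg Subtype.val x.2⟩
        invFun := fun a => ⟨⟨a.1, a.2.1, a.2.2.1⟩, Subtype.ext a.2.2.2⟩
        left_inv := fun x => Subtype.ext (Subtype.ext rfl)
        right_inv := fun a => Subtype.ext rfl }
  rw [Finset.sum_congr rfl (fun y _ => hterm y)]
  rw [Finset.sum_coe_sort (powersetCard b (univ : Finset (Fin n)))
    (fun _ => Nat.card {u : Fin b → ℕ // IsPPF u} * Nat.card {v : Fin (n - b) → ℕ // IsPF v})]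
  rw [Finset.sum_const, card_powersetCard, card_univ, Fintype.card_fin, smul_eq_mul]

lemma decomp (hn : 1 ≤ n) :
    Nat.card {a : Fin n → ℕ // IsPF a}
      = ∑ b ∈ Icc 1 n, n.choose b * (Nat.card {u : Fin b → ℕ // IsPPF u}
          * Nat.card {v : Fin (n - b) → ℕ // IsPF v}) := by
  rw [card_minB hn]
  refine Finset.sum_congr rfl fun b hb => ?_
  rw [mem_Icc] at hb
  exact card_minB_eq b hb.1 hb.2

lemma abel_identity (n : ℕ) (hn : 1 ≤ n) :
    (n+1)^(n-1) = ∑ b ∈ Icc 1 n, n.choose b * ((b-1)^(b-1) * (n-b+1)^(n-b-1)) := by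
  rw [← card_PF n, decomp hn]
  refine Finset.sum_congr rfl fun b hb => ?_
  rw [mem_Icc] at hb
  rw [card_PPF b hb.1, card_PF (n-b)]


end Decomp


section Analytic

lemma key_sum (n : ℕ) (hn : 1 ≤ n) :
    ∑ k ∈ range n, ((((k:ℚ)) + 1) ^ (k - 1) / k.factorial)
        * (((n - k - 1 : ℕ) : ℚ) ^ (n - k - 1) / (n - k).factorial)
      = ((n:ℚ) + 1) ^ (n - 1) / n.factorial := by
  have hfacn : ((n.factorial : ℚ)) ≠ 0 := by exact_mod_cast n.factorial_ne_zero
  have habel := congrArg (Nat.cast (R := ℚ)) (abel_identity n hn)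
  have hs : ((n:ℚ) + 1) ^ (n - 1) = (((n+1)^(n-1) : ℕ) : ℚ) := by push_cast; ring
  rw [hs, habel, Nat.cast_sum, Finset.sum_div]
  refine Finset.sum_nbij' (fun k => n - k) (fun b => n - b) ?_ ?_ ?_ ?_ ?_
  · intro k hk
    rw [mem_range] at hk
    rw [mem_Icc]
    show 1 ≤ n - k ∧ n - k ≤ n
    omega
  · intro b hb
    rw [mem_Icc] at hb
    rw [mem_range]
    show n - b < n
    omega
  · intro k hk
    rw [mem_range] at hk
    show n - (n - k) = k
    omega
  · intro b hb
    rw [mem_Icc] at hb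
    show n - (n - b) = b
    omega
  · intro k hk
    rw [mem_range] at hk
    have hfk : ((k.factorial : ℚ)) ≠ 0 := by exact_mod_cast k.factorial_ne_zero
    have hfnk : (((n-k).factorial : ℚ)) ≠ 0 := by exact_mod_cast (n-k).factorial_ne_zero
    rw [show n - (n - k) + 1 = k + 1 from by omega,
      show n - (n - k) - 1 = k - 1 from by omega]
    have hch : ((n.choose (n - k) : ℕ) : ℚ)
        = (n.factorial : ℚ) / (((n - k).factorial : ℚ) * (((n - (n - k)).factorial : ℚ))) :=
      Nat.cast_choose ℚ (Nat.sub_le n k)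
    rw [show n - (n - k) = k from by omega] at hch
    push_cast
    rw [hch]
    field_simp

lemma main2 :
    (PowerSeries.mk (fun n : ℕ => ((n + 1) ^ (n - 1) : ℚ) / n.factorial)) *
      (1 - PowerSeries.mk (fun n : ℕ => if n = 0 then 0 else
        ((n - 1 : ℕ) ^ (n - 1) : ℚ) / n.factorial)) = 1 := by
  apply PowerSeries.ext
  intro n
  rw [PowerSeries.coeff_mul, PowerSeries.coeff_one,
    Finset.Nat.sum_antidiagonal_eq_sum_range_succ_mk]
  simp only [map_sub, PowerSeries.coeff_one, PowerSeries.coeff_mk]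
  rcases Nat.eq_zero_or_pos n with rfl | hn
  · norm_num
  · rw [if_neg (by omega : ¬ n = 0), Finset.sum_range_succ, Nat.sub_self]
    have hrw : ∀ k ∈ range n,
        ((((k:ℚ)) + 1) ^ (k - 1) / k.factorial) *
          ((if n - k = 0 then (1:ℚ) else 0) -
            (if n - k = 0 then 0 else ((n - k - 1 : ℕ) : ℚ) ^ (n - k - 1) / (n - k).factorial))
          = -(((((k:ℚ)) + 1) ^ (k - 1) / k.factorial)
              * (((n - k - 1 : ℕ) : ℚ) ^ (n - k - 1) / (n - k).factorial)) := by
      intro k hk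
      rw [mem_range] at hk
      rw [if_neg (by omega), if_neg (by omega)]
      ring
    rw [Finset.sum_congr rfl hrw, Finset.sum_neg_distrib, key_sum n hn]
    norm_num

end Analytic


end ParkingAux

/-- In `ℚ[[t]]`, the exponential generating functions of parking functions and of
prime parking functions satisfy
`(Σ_{n≥0} |PF_n| tⁿ/n!) · (1 − Σ_{n≥1} |PPF_n| tⁿ/n!) = 1`;
explicitly, `Σ_{n≥0} (n+1)^{n-1} tⁿ/n! = (1 − t − Σ_{n≥2} (n−1)^{n-1} tⁿ/n!)⁻¹`
(note that `(n+1)^{n-1}` for `n ∈ {0,1}` and `(n-1)^{n-1}` for `n = 1` equal `1`,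
using truncated subtraction and `0^0 = 1`). -/
theorem egf_parking_prime_parking :
    (PowerSeries.mk (fun n : ℕ =>
        (Set.ncard {w : List ℕ | w.length = n ∧ IsParkingFunction w} : ℚ)
          / n.factorial)) *
      (1 - PowerSeries.mk (fun n : ℕ => if n = 0 then 0 else
        (Set.ncard {w : List ℕ | w.length = n ∧ IsPrimeParkingFunction w} : ℚ)
          / n.factorial)) = 1 ∧
    (PowerSeries.mk (fun n : ℕ => ((n + 1) ^ (n - 1) : ℚ) / n.factorial)) *
      (1 - PowerSeries.mk (fun n : ℕ => if n = 0 then 0 else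
        ((n - 1 : ℕ) ^ (n - 1) : ℚ) / n.factorial)) = 1 := by
  have hf1 : (fun n : ℕ =>
        (Set.ncard {w : List ℕ | w.length = n ∧ IsParkingFunction w} : ℚ) / n.factorial)
      = fun n : ℕ => ((n + 1) ^ (n - 1) : ℚ) / n.factorial := by
    funext k
    rw [ParkingAux.ncard_pf, ParkingAux.card_PF]
    push_cast
    ring
  have hf2 : (fun n : ℕ => if n = 0 then (0:ℚ) else
        (Set.ncard {w : List ℕ | w.length = n ∧ IsPrimeParkingFunction w} : ℚ) / n.factorial)
      = fun n : ℕ => if n = 0 then 0 else ((n - 1 : ℕ) ^ (n - 1) : ℚ) / n.factorial := by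
    funext k
    rcases Nat.eq_zero_or_pos k with rfl | hk
    · simp
    · rw [if_neg (by omega), if_neg (by omega), ParkingAux.ncard_ppf,
        ParkingAux.card_PPF k hk, Nat.cast_pow]
  constructor
  · rw [hf1, hf2]
    exact ParkingAux.main2
  · exact ParkingAux.main2
end
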